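/- arXiv:1901.06893 — 11 statements merged into one kernel-verified Lean document; each statement's English description precedes it below -/
import Mathlib

section
/- Let M be a matroid with circuit set C. If S ⊆ C has the property that every circuit of M not in S can be obtained by successively pasting circuits of S (where pasting two circuits C₁, C₂ with |C₁ ∩ C₂| = 1 means taking their symmetric difference), then S is a tropical basis of M. -/
open scoped symmDiff

/-- A matroid presented by its circuit set on ground set `Fin n`. -/
structure CircuitSet (n : ℕ) where
  circuits : Set (Finset (Fin n))
  empty_not_mem : ∅ ∉ circuits
  antichain : ∀ C₁ ∈ circuits, ∀ C₂ ∈ circuits, C₁ ⊆ C₂ → C₁ = C₂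
  elimination : ∀ C₁ ∈ circuits, ∀ C₂ ∈ circuits, C₁ ≠ C₂ →
    ∀ e ∈ C₁ ∩ C₂, ∃ C₃ ∈ circuits, C₃ ⊆ (C₁ ∪ C₂) \ {e}

/-- Tropical projective space: tuples in (ℝ ∪ {±∞})ᵀ, not identically -∞
(we model tropical numbers ℝ ∪ {-∞} inside `EReal`; points of `TP` avoid `⊤` as well). -/
def TP (n : ℕ) : Set (Fin n → EReal) :=
  {x | (∀ i, x i ≠ ⊤) ∧ ∃ i, x i ≠ ⊥}

/-- The tropical hyperplane of a circuit: the maximum over the circuit is attained twice. -/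
def V {n : ℕ} (D : Finset (Fin n)) : Set (Fin n → EReal) :=
  {x | ∃ i ∈ D, ∃ j ∈ D, i ≠ j ∧ x i = x j ∧ ∀ k ∈ D, x k ≤ x i}

/-- `B` is a tropical basis: a subset of the circuit set whose tropical prevariety
equals the Bergman fan. -/
def IsTropicalBasis {n : ℕ} (M : CircuitSet n) (B : Set (Finset (Fin n))) : Prop :=
  B ⊆ M.circuits ∧ (TP n ∩ ⋂ D ∈ B, V D) = (TP n ∩ ⋂ D ∈ M.circuits, V D)

def IsMinimalTropicalBasis {n : ℕ} (M : CircuitSet n) (B : Set (Finset (Fin n))) : Prop :=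
  IsTropicalBasis M B ∧ ∀ B' ⊂ B, ¬ IsTropicalBasis M B'

def HasUniqueMinimalTropicalBasis {n : ℕ} (M : CircuitSet n) : Prop :=
  ∃! B, IsMinimalTropicalBasis M B

/-- The intersection `B_M` of all tropical bases of `M`. -/
def troBasisInter {n : ℕ} (M : CircuitSet n) : Set (Finset (Fin n)) :=
  ⋂₀ {B | IsTropicalBasis M B}

/-- Simple matroid: every circuit has cardinality at least 3. -/
def CircuitSet.Simple {n : ℕ} (M : CircuitSet n) : Prop :=
  ∀ C ∈ M.circuits, 3 ≤ C.card

/-- Binary matroid (circuit characterization): the symmetric difference of any two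
circuits is a disjoint union of circuits. -/
def CircuitSet.BinarySD {n : ℕ} (M : CircuitSet n) : Prop :=
  ∀ C₁ ∈ M.circuits, ∀ C₂ ∈ M.circuits,
    ∃ S : Finset (Finset (Fin n)), ↑S ⊆ M.circuits ∧
      (S : Set (Finset (Fin n))).PairwiseDisjoint id ∧ C₁ ∆ C₂ = S.sup id

/-- `M` is representable over the field `K`: its circuits are exactly the minimal
linearly dependent subsets of some family of vectors. -/
def Represents (K : Type) [Field K] {n : ℕ} (M : CircuitSet n) : Prop :=
  ∃ (m : ℕ) (v : Fin n → (Fin m → K)),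
    ∀ C : Finset (Fin n), C ∈ M.circuits ↔
      (¬ LinearIndependent K (fun i : ↥C => v i.1) ∧
        ∀ D : Finset (Fin n), D ⊂ C → LinearIndependent K (fun i : ↥D => v i.1))

/-- The closure of `S` under pasting: circuits obtained by successively pasting
(taking symmetric differences of sets meeting in exactly one element). -/
inductive Pasted {n : ℕ} (S : Set (Finset (Fin n))) : Finset (Fin n) → Prop
  | base {C : Finset (Fin n)} : C ∈ S → Pasted S C
  | paste {C₁ C₂ : Finset (Fin n)} : Pasted S C₁ → Pasted S C₂ →
      (C₁ ∩ C₂).card = 1 → Pasted S (C₁ ∆ C₂)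

lemma paste_V {n : ℕ} {x : Fin n → EReal} {C₁ C₂ : Finset (Fin n)}
    (h₁ : x ∈ V C₁) (h₂ : x ∈ V C₂) (hcard : (C₁ ∩ C₂).card = 1) :
    x ∈ V (C₁ ∆ C₂) := by
  obtain ⟨e, he⟩ := Finset.card_eq_one.mp hcard
  have hint : ∀ a, a ∈ C₁ → a ∈ C₂ → a = e := by
    intro a ha1 ha2
    have : a ∈ C₁ ∩ C₂ := Finset.mem_inter.mpr ⟨ha1, ha2⟩
    simpa [he] using this
  have heC₁ : e ∈ C₁ := by
    have : e ∈ C₁ ∩ C₂ := by simp [he]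
    exact (Finset.mem_inter.mp this).1
  have heC₂ : e ∈ C₂ := by
    have : e ∈ C₁ ∩ C₂ := by simp [he]
    exact (Finset.mem_inter.mp this).2
  obtain ⟨i₁, hi₁, j₁, hj₁, hij₁, hx₁, hmax₁⟩ := h₁
  obtain ⟨i₂, hi₂, j₂, hj₂, hij₂, hx₂, hmax₂⟩ := h₂
  have memSD : ∀ a, a ∈ C₁ ∆ C₂ ↔ (a ∈ C₁ ∧ a ∉ C₂) ∨ (a ∈ C₂ ∧ a ∉ C₁) := by
    intro a; exact Finset.mem_symmDiff
  rcases lt_trichotomy (x i₁) (x i₂) with hlt | heq | hlt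
  · -- max on C₂ side strictly bigger
    have hne : i₂ ≠ e ∧ j₂ ≠ e := by
      constructor
      · rintro rfl; exact absurd (hmax₁ _ heC₁) (not_le.mpr hlt)
      · rintro rfl
        have : x j₂ ≤ x i₁ := hmax₁ _ heC₁
        exact not_lt.mpr this (hx₂ ▸ hlt)
    have hi2 : i₂ ∈ C₁ ∆ C₂ := (memSD i₂).mpr (Or.inr ⟨hi₂, fun hc =>
      hne.1 (hint _ hc hi₂)⟩)
    have hj2 : j₂ ∈ C₁ ∆ C₂ := (memSD j₂).mpr (Or.inr ⟨hj₂, fun hc =>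
      hne.2 (hint _ hc hj₂)⟩)
    exact ⟨i₂, hi2, j₂, hj2, hij₂, hx₂, fun k hk => by
      rcases (memSD k).mp hk with ⟨h1, _⟩ | ⟨h2, _⟩
      · exact le_of_lt (lt_of_le_of_lt (hmax₁ _ h1) hlt)
      · exact hmax₂ _ h2⟩
  · -- equal maxima
    obtain ⟨a, haC₁, hane, hxa⟩ : ∃ a, a ∈ C₁ ∧ a ≠ e ∧ x a = x i₁ := by
      by_cases hi : i₁ = e
      · exact ⟨j₁, hj₁, fun hc => hij₁ (hi.trans hc.symm), hx₁.symm⟩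
      · exact ⟨i₁, hi₁, hi, rfl⟩
    obtain ⟨b, hbC₂, hbne, hxb⟩ : ∃ b, b ∈ C₂ ∧ b ≠ e ∧ x b = x i₂ := by
      by_cases hi : i₂ = e
      · exact ⟨j₂, hj₂, fun hc => hij₂ (hi.trans hc.symm), hx₂.symm⟩
      · exact ⟨i₂, hi₂, hi, rfl⟩
    have haC₂ : a ∉ C₂ := fun hc => hane (hint _ haC₁ hc)
    have hbC₁ : b ∉ C₁ := fun hc => hbne (hint _ hc hbC₂)
    refine ⟨a, (memSD a).mpr (Or.inl ⟨haC₁, haC₂⟩), b,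
      (memSD b).mpr (Or.inr ⟨hbC₂, hbC₁⟩), fun hc => haC₂ (hc ▸ hbC₂),
      by rw [hxa, hxb, heq], fun k hk => ?_⟩
    rcases (memSD k).mp hk with ⟨h1, _⟩ | ⟨h2, _⟩
    · rw [hxa]; exact hmax₁ _ h1
    · rw [hxa, heq]; exact hmax₂ _ h2
  · -- max on C₁ side strictly bigger
    have hne : i₁ ≠ e ∧ j₁ ≠ e := by
      constructor
      · rintro rfl; exact absurd (hmax₂ _ heC₂) (not_le.mpr hlt)
      · rintro rfl
        have : x j₁ ≤ x i₂ := hmax₂ _ heC₂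
        exact not_lt.mpr this (hx₁ ▸ hlt)
    have hi1 : i₁ ∈ C₁ ∆ C₂ := (memSD i₁).mpr (Or.inl ⟨hi₁, fun hc =>
      hne.1 (hint _ hi₁ hc)⟩)
    have hj1 : j₁ ∈ C₁ ∆ C₂ := (memSD j₁).mpr (Or.inl ⟨hj₁, fun hc =>
      hne.2 (hint _ hj₁ hc)⟩)
    exact ⟨i₁, hi1, j₁, hj1, hij₁, hx₁, fun k hk => by
      rcases (memSD k).mp hk with ⟨h1, _⟩ | ⟨h2, _⟩
      · exact hmax₁ _ h1
      · exact le_of_lt (lt_of_le_of_lt (hmax₂ _ h2) hlt)⟩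

lemma pasted_V {n : ℕ} {x : Fin n → EReal} {S : Set (Finset (Fin n))}
    (hx : ∀ D ∈ S, x ∈ V D) {C : Finset (Fin n)} (hC : Pasted S C) : x ∈ V C := by
  induction hC with
  | base hCS => exact hx _ hCS
  | paste _ _ hcard ih₁ ih₂ => exact paste_V ih₁ ih₂ hcard

theorem stmt2 {n : ℕ} (M : CircuitSet n) (S : Set (Finset (Fin n)))
    (hS : S ⊆ M.circuits) (h : ∀ C ∈ M.circuits, C ∉ S → Pasted S C) :
    IsTropicalBasis M S := by
  refine ⟨hS, Set.Subset.antisymm ?_ ?_⟩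
  · rintro x ⟨hxTP, hxV⟩
    refine ⟨hxTP, Set.mem_iInter₂.mpr fun C hC => ?_⟩
    have hxS : ∀ D ∈ S, x ∈ V D := fun D hD => Set.mem_iInter₂.mp hxV D hD
    by_cases hCS : C ∈ S
    · exact hxS _ hCS
    · exact pasted_V hxS (h C hC hCS)
  · rintro x ⟨hxTP, hxV⟩
    exact ⟨hxTP, Set.mem_iInter₂.mpr fun D hD =>
      Set.mem_iInter₂.mp hxV D (hS hD)⟩
end

section
/- For every element i ∈ [n], the set B_i = {C : C is a circuit of U_{d,n} and i ∈ C} is a tropical basis of the uniform matroid U_{d,n}. -/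
open scoped symmDiff

theorem stmt3 {d n : ℕ} (hdn : d + 1 ≤ n) (M : CircuitSet n)
    (hM : M.circuits = {C : Finset (Fin n) | C.card = d + 1}) (i : Fin n) :
    IsTropicalBasis M {C | C ∈ M.circuits ∧ i ∈ C} := by
  constructor
  · intro C hC; exact hC.1
  apply Set.Subset.antisymm
  · rintro x ⟨hTP, hx⟩
    refine ⟨hTP, Set.mem_iInter₂.2 fun C hC => ?_⟩
    rw [hM] at hC
    have hcard : C.card = d + 1 := hC
    have hmem : ∀ D : Finset (Fin n), D.card = d + 1 → i ∈ D → x ∈ V D := by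
      intro D hDc hiD
      exact Set.mem_iInter₂.1 hx D ⟨by rw [hM]; exact hDc, hiD⟩
    by_cases hi : i ∈ C
    · exact hmem C hcard hi
    -- i ∉ C : main argument
    by_contra hcon
    have hne : C.Nonempty := Finset.card_pos.1 (by omega)
    obtain ⟨j, hj, hjmax⟩ := C.exists_max_image x hne
    -- unique strict maximizer
    have hstrict : ∀ b ∈ C, b ≠ j → x b < x j := by
      intro b hb hbj
      refine lt_of_le_of_ne (hjmax b hb) fun he => ?_
      exact hcon ⟨b, hb, j, hj, hbj, he, fun k hk => he ▸ hjmax k hk⟩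
    rcases Nat.eq_zero_or_pos d with hd | hd
    · -- d = 0 : the circuit {i} gives a contradiction
      obtain ⟨a, ha, b, hb, hab, -⟩ := hmem {i} (by simp [hd]) (Finset.mem_singleton_self i)
      rw [Finset.mem_singleton] at ha hb
      exact hab (ha.trans hb.symm)
    -- pick k ∈ C, k ≠ j
    obtain ⟨k, hk, hkj⟩ := Finset.exists_mem_ne (s := C) (by omega) j
    have hiek : i ∉ C.erase k := fun h => hi (Finset.mem_of_mem_erase h)
    have hiej : i ∉ C.erase j := fun h => hi (Finset.mem_of_mem_erase h)
    -- first circuit: (C \ {k}) ∪ {i}, deduce x i = x j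
    have hxij : x i = x j := by
      obtain ⟨a, ha, b, hb, hab, hxab, hmax⟩ :=
        hmem (insert i (C.erase k))
          (by rw [Finset.card_insert_of_notMem hiek, Finset.card_erase_of_mem hk, hcard]; omega)
          (Finset.mem_insert_self i _)
      have hjD : j ∈ insert i (C.erase k) :=
        Finset.mem_insert_of_mem (Finset.mem_erase.2 ⟨hkj.symm, hj⟩)
      have hja : x j ≤ x a := hmax j hjD
      rcases Finset.mem_insert.1 ha with rfl | ha'
      · rcases Finset.mem_insert.1 hb with rfl | hb'
        · exact absurd rfl hab
        · exact le_antisymm (hxab.le.trans (hjmax b (Finset.mem_of_mem_erase hb'))) hja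
      · have haC := Finset.mem_of_mem_erase ha'
        have haj : a = j := by
          by_contra hne
          exact absurd hja (not_le.2 (hstrict a haC hne))
        rcases Finset.mem_insert.1 hb with rfl | hb'
        · exact (haj ▸ hxab).symm
        · have hlt := hstrict b (Finset.mem_of_mem_erase hb')
            (fun h => hab (haj.trans h.symm))
          exact absurd (haj ▸ hxab) (ne_of_gt hlt)
    -- second circuit: (C \ {j}) ∪ {i}, contradiction
    obtain ⟨a, ha, b, hb, hab, hxab, hmax⟩ :=
      hmem (insert i (C.erase j))
        (by rw [Finset.card_insert_of_notMem hiej, Finset.card_erase_of_mem hj, hcard]; omega)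
        (Finset.mem_insert_self i _)
    have hxi_le : x i ≤ x a := hmax i (Finset.mem_insert_self i _)
    rcases Finset.mem_insert.1 ha with rfl | ha'
    · -- a = i, so b ∈ C \ {j}
      rcases Finset.mem_insert.1 hb with rfl | hb'
      · exact hab rfl
      · have hbC := Finset.mem_of_mem_erase hb'
        have hbj := Finset.ne_of_mem_erase hb'
        have := hstrict b hbC hbj
        rw [← hxab, ← hxij] at this
        exact lt_irrefl _ this
    · have haC := Finset.mem_of_mem_erase ha'
      have haj := Finset.ne_of_mem_erase ha'
      have h1 : x a < x j := hstrict a haC haj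
      rw [← hxij] at h1
      exact absurd hxi_le (not_le.2 h1)
  · rintro x ⟨hTP, hx⟩
    refine ⟨hTP, Set.mem_iInter₂.2 fun D hD => Set.mem_iInter₂.1 hx D hD.1⟩
end

section
/- If n > d + 1 ≥ 3, then the uniform matroid U_{d,n} has at least two distinct minimal tropical bases; in particular, U_{d,n} does not have a unique minimal tropical basis. -/
open scoped symmDiff

section Aux

variable {d n : ℕ}

/-- The circuits through a fixed element `i`. -/
def Bset (d : ℕ) {n : ℕ} (i : Fin n) : Set (Finset (Fin n)) :=
  {C | C.card = d + 1 ∧ i ∈ C}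

lemma key_lemma (hd : 1 ≤ d) (i : Fin n) (x : Fin n → EReal)
    (hx : ∀ C : Finset (Fin n), C.card = d + 1 → i ∈ C → x ∈ V C)
    (C : Finset (Fin n)) (hC : C.card = d + 1) : x ∈ V C := by
  by_cases hiC : i ∈ C
  · exact hx C hC hiC
  by_contra hV
  have hCne : C.Nonempty := Finset.card_pos.mp (by omega)
  obtain ⟨a, haC, hamax⟩ := C.exists_max_image x hCne
  have hstrict : ∀ b ∈ C, b ≠ a → x b < x a := by
    intro b hbC hba
    rcases lt_or_eq_of_le (hamax b hbC) with h | h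
    · exact h
    · exact absurd ⟨a, haC, b, hbC, hba.symm, h.symm, hamax⟩ hV
  rcases le_or_gt (x a) (x i) with hxi | hxi
  · -- replace a with i
    set C' := insert i (C.erase a) with hC'
    have hiC' : i ∉ C.erase a := fun h => hiC (Finset.mem_of_mem_erase h)
    have hcard : C'.card = d + 1 := by
      rw [hC', Finset.card_insert_of_notMem hiC', Finset.card_erase_of_mem haC, hC]
      omega
    obtain ⟨p, hp, q, hq, hpq, heq, hmax⟩ := hx C' hcard (Finset.mem_insert_self _ _)
    have hub : ∀ k ∈ C', k ≠ i → x k < x i := by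
      intro k hk hki
      rcases Finset.mem_insert.mp hk with h | h
      · exact absurd h hki
      · exact lt_of_lt_of_le (hstrict k (Finset.mem_of_mem_erase h)
          (Finset.ne_of_mem_erase h)) hxi
    have hpi : p = i := by
      by_contra h
      exact absurd (hmax i (Finset.mem_insert_self _ _)) (not_le.mpr (hub p hp h))
    have hqi : q = i := by
      by_contra h
      have := hub q hq h
      rw [← heq, hpi] at this
      exact absurd this (lt_irrefl _)
    exact hpq (hpi.trans hqi.symm)
  · -- x i < x a: replace some b ≠ a with i
    obtain ⟨b, hbC, hba⟩ := Finset.exists_mem_ne (by rw [hC]; omega) a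
    set C' := insert i (C.erase b) with hC'
    have hiC' : i ∉ C.erase b := fun h => hiC (Finset.mem_of_mem_erase h)
    have hcard : C'.card = d + 1 := by
      rw [hC', Finset.card_insert_of_notMem hiC', Finset.card_erase_of_mem hbC, hC]
      omega
    have haC' : a ∈ C' := Finset.mem_insert_of_mem (Finset.mem_erase.mpr ⟨hba.symm, haC⟩)
    obtain ⟨p, hp, q, hq, hpq, heq, hmax⟩ := hx C' hcard (Finset.mem_insert_self _ _)
    have hub : ∀ k ∈ C', k ≠ a → x k < x a := by
      intro k hk hka
      rcases Finset.mem_insert.mp hk with h | h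
      · rw [h]; exact hxi
      · exact hstrict k (Finset.mem_of_mem_erase h) hka
    have hpa : p = a := by
      by_contra h
      exact absurd (hmax a haC') (not_le.mpr (hub p hp h))
    have hqa : q = a := by
      by_contra h
      have := hub q hq h
      rw [← heq, hpa] at this
      exact absurd this (lt_irrefl _)
    exact hpq (hpa.trans hqa.symm)

lemma Bset_minimal (h1 : n > d + 1) (hd : 1 ≤ d) (M : CircuitSet n)
    (hM : M.circuits = {C : Finset (Fin n) | C.card = d + 1}) (i : Fin n) :
    IsMinimalTropicalBasis M (Bset d i) := by
  have hsub : Bset d i ⊆ M.circuits := by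
    rw [hM]; intro C hC; exact hC.1
  constructor
  · refine ⟨hsub, ?_⟩
    apply Set.Subset.antisymm
    · rintro x ⟨hxTP, hxB⟩
      refine ⟨hxTP, ?_⟩
      simp only [Set.mem_iInter] at hxB ⊢
      intro C hC
      rw [hM] at hC
      exact key_lemma hd i x (fun C' h1' h2' => hxB C' ⟨h1', h2'⟩) C hC
    · rintro x ⟨hxTP, hxC⟩
      refine ⟨hxTP, ?_⟩
      simp only [Set.mem_iInter] at hxC ⊢
      exact fun C hC => hxC C (hsub hC)
  · rintro B' hB' ⟨hB'sub, hB'eq⟩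
    obtain ⟨D, hDB, hDB'⟩ := Set.exists_of_ssubset hB'
    set x : Fin n → EReal := fun j => if j ∈ D.erase i then 0 else 1 with hxdef
    have hxval : ∀ j, x j = 0 ∨ x j = 1 := by
      intro j
      by_cases h : j ∈ D.erase i
      · left; simp only [hxdef, if_pos h]
      · right; simp only [hxdef, if_neg h]
    have hxi : x i = 1 := by simp [hxdef]
    have hxTP : x ∈ TP n := by
      constructor
      · intro j
        rcases hxval j with h | h <;> rw [h]
        · exact_mod_cast EReal.coe_ne_top 0
        · exact_mod_cast EReal.coe_ne_top 1
      · refine ⟨i, ?_⟩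
        rw [hxi]
        exact_mod_cast EReal.coe_ne_bot 1
    have hxle : ∀ j, x j ≤ 1 := by
      intro j
      rcases hxval j with h | h
      · rw [h]; exact zero_le_one
      · exact h.le
    have hxV : ∀ C ∈ B', x ∈ V C := by
      intro C hC
      have hCB : C ∈ Bset d i := hB'.1 hC
      have hCD : C ≠ D := fun h => hDB' (h ▸ hC)
      -- get an element of C not in D
      have : ¬ C ⊆ D := fun h => hCD (Finset.eq_of_subset_of_card_le h
        (by rw [hCB.1, hDB.1]))
      obtain ⟨b, hbC, hbD⟩ := Finset.not_subset.mp this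
      have hbi : b ≠ i := fun h => hbD (h ▸ hDB.2)
      have hxb : x b = 1 := by
        simp only [hxdef, if_neg (fun h => hbD (Finset.mem_of_mem_erase h))]
      exact ⟨i, hCB.2, b, hbC, fun h => hbi h.symm, by rw [hxi, hxb],
        fun k _ => by rw [hxi]; exact hxle k⟩
    have hxnV : x ∉ V D := by
      rintro ⟨p, hp, q, hq, hpq, heq, hmax⟩
      have h1p : (1 : EReal) ≤ x p := hxi ▸ hmax i hDB.2
      have hpi : p = i := by
        by_contra h
        have h0 : x p = 0 := by
          simp only [hxdef, if_pos (Finset.mem_erase.mpr ⟨h, hp⟩)]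
        rw [h0] at h1p
        exact absurd h1p (not_le.mpr zero_lt_one)
      have hqi : q = i := by
        by_contra h
        have h0 : x q = 0 := by
          simp only [hxdef, if_pos (Finset.mem_erase.mpr ⟨h, hq⟩)]
        rw [heq, h0] at h1p
        exact absurd h1p (not_le.mpr zero_lt_one)
      exact hpq (hpi.trans hqi.symm)
    have hxL : x ∈ TP n ∩ ⋂ C ∈ B', V C := by
      refine ⟨hxTP, ?_⟩
      simp only [Set.mem_iInter]
      exact hxV
    rw [hB'eq] at hxL
    have : x ∈ V D := by
      have := hxL.2
      simp only [Set.mem_iInter] at this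
      exact this D (hsub hDB)
    exact hxnV this

end Aux

theorem stmt4 {d n : ℕ} (h1 : n > d + 1) (h2 : d + 1 ≥ 3) (M : CircuitSet n)
    (hM : M.circuits = {C : Finset (Fin n) | C.card = d + 1}) :
    (∃ B₁ B₂, B₁ ≠ B₂ ∧ IsMinimalTropicalBasis M B₁ ∧ IsMinimalTropicalBasis M B₂) ∧
      ¬ HasUniqueMinimalTropicalBasis M := by
  have hd : 1 ≤ d := by omega
  set i0 : Fin n := ⟨0, by omega⟩ with hi0
  set i1 : Fin n := ⟨1, by omega⟩ with hi1
  have hi01 : i0 ≠ i1 := by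
    intro h
    have := congrArg Fin.val h
    simp [hi0, hi1] at this
  -- a circuit through i0 avoiding i1
  have hsub : ({i0} : Finset (Fin n)) ⊆ Finset.univ.erase i1 :=
    Finset.singleton_subset_iff.mpr (Finset.mem_erase.mpr ⟨hi01, Finset.mem_univ _⟩)
  obtain ⟨C, hC0, hCsub, hCcard⟩ := Finset.exists_subsuperset_card_eq (n := d + 1) hsub
    (by simp) (by rw [Finset.card_erase_of_mem (Finset.mem_univ _), Finset.card_univ,
      Fintype.card_fin]; omega)
  have hCne : C ∈ Bset d i0 ∧ C ∉ Bset d i1 := by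
    refine ⟨⟨hCcard, hC0 (Finset.mem_singleton_self _)⟩, ?_⟩
    rintro ⟨-, h1C⟩
    exact absurd (hCsub h1C) (Finset.notMem_erase i1 _)
  have hne : Bset d i0 ≠ Bset d i1 := fun h => hCne.2 (h ▸ hCne.1)
  have hmin0 := Bset_minimal h1 hd M hM i0
  have hmin1 := Bset_minimal h1 hd M hM i1
  refine ⟨⟨Bset d i0, Bset d i1, hne, hmin0, hmin1⟩, ?_⟩
  rintro ⟨B, -, huniq⟩
  exact hne ((huniq _ hmin0).trans (huniq _ hmin1).symm)
end

section
/- Let M be a simple binary matroid and let C, C' be distinct circuits of M with |C' \ C| = 1. Then the symmetric difference C △ C' is a circuit of M, and writing C₁ = C △ C', the circuits C₁ and C' intersect in exactly the one element of C' \ C, and C₁ △ C' = C. -/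
open scoped symmDiff

theorem stmt6 {n : ℕ} (M : CircuitSet n) (hs : M.Simple) (hb : M.BinarySD)
    (C C' : Finset (Fin n)) (hC : C ∈ M.circuits) (hC' : C' ∈ M.circuits)
    (hne : C ≠ C') (h1 : (C' \ C).card = 1) :
    C ∆ C' ∈ M.circuits ∧ (C ∆ C') ∩ C' = C' \ C ∧ (C ∆ C') ∆ C' = C := by

  classical
  obtain ⟨S, hSc, hdisj, hsup⟩ := hb C hC C' hC'
  obtain ⟨e, he⟩ := Finset.card_eq_one.mp h1
  -- C ∩ C' is nonempty
  have hcard : 2 ≤ (C' ∩ C).card := by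
    have h3 : 3 ≤ C'.card := hs C' hC'
    have := Finset.card_inter_add_card_sdiff C' C
    omega
  obtain ⟨x, hx⟩ := Finset.card_pos.mp (by omega : 0 < (C' ∩ C).card)
  have hxC' : x ∈ C' := (Finset.mem_inter.mp hx).1
  have hxC : x ∈ C := (Finset.mem_inter.mp hx).2
  -- every circuit in S contains e
  have hkey : ∀ D ∈ S, e ∈ D := by
    intro D hD
    by_contra heD
    have hDc : D ∈ M.circuits := hSc hD
    have hDsub : D ⊆ C ∆ C' := by
      rw [hsup]; exact Finset.le_sup (f := id) hD
    have hDC : D ⊆ C := by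
      intro y hy
      have := hDsub hy
      rw [Finset.mem_symmDiff] at this
      rcases this with h | h
      · exact h.1
      · exfalso
        have : y ∈ C' \ C := Finset.mem_sdiff.mpr ⟨h.1, h.2⟩
        rw [he, Finset.mem_singleton] at this
        exact heD (this ▸ hy)
    have hDeq : D = C := M.antichain D hDc C hC hDC
    subst hDeq
    have := hDsub hxC
    rw [Finset.mem_symmDiff] at this
    tauto
  -- S is nonempty
  have hne' : C ∆ C' ≠ ∅ := by
    intro h
    apply hne
    have : C ∆ C' = ⊥ := h
    exact symmDiff_eq_bot.mp this
  obtain ⟨D₀, hD₀⟩ : S.Nonempty := by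
    rcases S.eq_empty_or_nonempty with h | h
    · exfalso; apply hne'; rw [hsup, h]; simp
    · exact h
  have hSeq : S = {D₀} := by
    apply Finset.eq_singleton_iff_unique_mem.mpr
    refine ⟨hD₀, fun D hD => ?_⟩
    by_contra hne2
    have := hdisj hD hD₀ hne2
    have h1' : e ∈ D := hkey D hD
    have h2' : e ∈ D₀ := hkey D₀ hD₀
    exact (Finset.disjoint_left.mp this h1') h2'
  have hCC' : C ∆ C' = D₀ := by
    rw [hsup, hSeq]; simp
  refine ⟨hCC' ▸ hSc hD₀, ?_, ?_⟩
  · ext y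
    simp only [Finset.mem_inter, Finset.mem_symmDiff, Finset.mem_sdiff]
    tauto
  · exact symmDiff_symmDiff_cancel_right C' C
end

section
/- Let M be a simple binary matroid on ground set [n] and let C be a circuit of M that cannot be written as the pasting of two circuits (i.e., there are no circuits C₁, C₂ with |C₁ ∩ C₂| = 1 and C₁ △ C₂ = C). Then every circuit C' ≠ C of M satisfies |C' \ C| ≥ 2. -/
open scoped symmDiff

theorem stmt7 {n : ℕ} (M : CircuitSet n) (hs : M.Simple) (hb : M.BinarySD)
    (C : Finset (Fin n)) (hC : C ∈ M.circuits)
    (hnp : ¬ ∃ C₁ ∈ M.circuits, ∃ C₂ ∈ M.circuits, (C₁ ∩ C₂).card = 1 ∧ C₁ ∆ C₂ = C) :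
    ∀ C' ∈ M.circuits, C' ≠ C → 2 ≤ (C' \ C).card := by
  intro C' hC' hne
  by_contra h
  push_neg at h
  have hsub : ¬ C' ⊆ C := fun hsub => hne (M.antichain C' hC' C hC hsub)
  have hne1 : (C' \ C).Nonempty := Finset.sdiff_nonempty.mpr hsub
  have hcard1 : (C' \ C).card = 1 := by
    have := Finset.card_pos.mpr hne1; omega
  obtain ⟨e, he⟩ := Finset.card_eq_one.mp hcard1
  have heC' : e ∈ C' := (Finset.mem_sdiff.mp (he ▸ Finset.mem_singleton_self e)).1
  have heC : e ∉ C := (Finset.mem_sdiff.mp (he ▸ Finset.mem_singleton_self e)).2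
  obtain ⟨T, hTsub, hTdisj, hTsup⟩ := hb C hC C' hC'
  have heSD : e ∈ C ∆ C' := by
    simp [symmDiff_def, Finset.mem_union, Finset.mem_sdiff, heC', heC]
  rw [hTsup] at heSD
  obtain ⟨D, hDT, heD⟩ := Finset.mem_sup.mp heSD
  have hDcirc : D ∈ M.circuits := hTsub hDT
  have hDsub : D ⊆ C ∆ C' := hTsup ▸ Finset.le_sup (f := id) hDT
  -- elements of D other than e are in C \ C'
  have hDmem : ∀ x ∈ D, x ≠ e → x ∈ C ∧ x ∉ C' := by
    intro x hx hxe
    have := hDsub hx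
    rw [symmDiff_def] at this
    rcases Finset.mem_union.mp this with h1 | h1
    · exact Finset.mem_sdiff.mp h1
    · exfalso; have : x ∈ C' \ C := h1
      rw [he] at this; exact hxe (Finset.mem_singleton.mp this)
  have hinter : C' ∩ D = {e} := by
    ext x
    simp only [Finset.mem_inter, Finset.mem_singleton]
    constructor
    · rintro ⟨hx1, hx2⟩
      by_contra hxe
      exact (hDmem x hx2 hxe).2 hx1
    · rintro rfl; exact ⟨heC', heD⟩
  -- second binary application
  obtain ⟨S, hSsub, hSdisj, hSsup⟩ := hb C' hC' D hDcirc
  have hSDC : C' ∆ D ⊆ C := by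
    intro x hx
    rw [symmDiff_def] at hx
    rcases Finset.mem_union.mp hx with h1 | h1
    · obtain ⟨hx1, hx2⟩ := Finset.mem_sdiff.mp h1
      by_contra hxC
      have : x ∈ C' \ C := Finset.mem_sdiff.mpr ⟨hx1, hxC⟩
      rw [he] at this
      exact hx2 (Finset.mem_singleton.mp this ▸ heD)
    · obtain ⟨hx1, hx2⟩ := Finset.mem_sdiff.mp h1
      have hxe : x ≠ e := fun hh => hx2 (hh ▸ heC')
      exact (hDmem x hx1 hxe).1
  have hallC : ∀ X ∈ S, X = C := by
    intro X hX
    have hXsub : X ⊆ C' ∆ D := hSsup ▸ Finset.le_sup (f := id) hX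
    exact M.antichain X (hSsub hX) C hC (hXsub.trans hSDC)
  -- C' ∆ D is nonempty
  have hDcard : 3 ≤ D.card := hs D hDcirc
  have hnonempty : (C' ∆ D).Nonempty := by
    have : (D \ {e}).Nonempty := by
      rw [← Finset.card_pos]
      have h2 : D.card - ({e} : Finset (Fin n)).card ≤ (D \ {e}).card :=
        Finset.le_card_sdiff _ _
      simp only [Finset.card_singleton] at h2; omega
    obtain ⟨x, hx⟩ := this
    obtain ⟨hx1, hx2⟩ := Finset.mem_sdiff.mp hx
    have hxe : x ≠ e := fun hh => hx2 (Finset.mem_singleton.mpr hh)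
    refine ⟨x, ?_⟩
    rw [symmDiff_def]
    exact Finset.mem_union_right _ (Finset.mem_sdiff.mpr ⟨hx1, (hDmem x hx1 hxe).2⟩)
  have hSne : S.Nonempty := by
    by_contra hS
    rw [Finset.not_nonempty_iff_eq_empty] at hS
    rw [hS] at hSsup
    simp only [Finset.sup_empty, Finset.bot_eq_empty] at hSsup
    rw [hSsup] at hnonempty
    exact Finset.not_nonempty_empty hnonempty
  have hsupC : C' ∆ D = C := by
    rw [hSsup]
    apply le_antisymm
    · apply Finset.sup_le
      intro X hX; rw [hallC X hX]; exact le_rfl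
    · obtain ⟨X, hX⟩ := hSne
      exact le_trans (le_of_eq (hallC X hX).symm) (Finset.le_sup (f := id) hX)
  exact hnp ⟨C', hC', D, hDcirc, by rw [hinter]; simp, hsupC⟩
end

section
/- Let M be a simple binary matroid on ground set [n] and let C be a circuit. Then C is not in the intersection B_M of all tropical bases of M if and only if there exist circuits C₁, C₂ of M with |C₁ ∩ C₂| = 1 and C₁ △ C₂ = C. -/
open scoped symmDiff

lemma key_decomp {n : ℕ} (M : CircuitSet n) (hs : M.Simple) (hb : M.BinarySD)
    {C D : Finset (Fin n)} (hC : C ∈ M.circuits) (hD : D ∈ M.circuits) (hne : D ≠ C)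
    (h1 : (D \ C).card = 1) :
    ∃ C₁ ∈ M.circuits, ∃ C₂ ∈ M.circuits, (C₁ ∩ C₂).card = 1 ∧ C₁ ∆ C₂ = C := by
  obtain ⟨f, hf⟩ := Finset.card_eq_one.mp h1
  have hfm : f ∈ D \ C := by rw [hf]; exact Finset.mem_singleton_self f
  have hfD : f ∈ D := (Finset.mem_sdiff.mp hfm).1
  have hfC : f ∉ C := (Finset.mem_sdiff.mp hfm).2
  obtain ⟨g, hgD, hgf⟩ := Finset.exists_mem_ne (s := D) (by have := hs D hD; omega) f
  have hgC : g ∈ C := by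
    by_contra hgC
    have : g ∈ D \ C := Finset.mem_sdiff.mpr ⟨hgD, hgC⟩
    rw [hf] at this
    exact hgf (Finset.mem_singleton.mp this)
  obtain ⟨S, hSsub, hSdisj, hsup⟩ := hb C hC D hD
  have hfCD : f ∈ C ∆ D := Finset.mem_symmDiff.mpr (Or.inr ⟨hfD, hfC⟩)
  have hfsup : f ∈ S.sup id := by rw [← hsup]; exact hfCD
  obtain ⟨T, hTS, hfT⟩ := Finset.mem_sup.mp hfsup
  have hall : ∀ T' ∈ S, f ∈ T' := by
    intro T' hT'
    by_contra hfT'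
    have hsubsup : T' ⊆ S.sup id := Finset.le_sup (f := id) hT'
    have hsub : T' ⊆ C := by
      intro a ha
      have haCD : a ∈ C ∆ D := by rw [hsup]; exact hsubsup ha
      rcases Finset.mem_symmDiff.mp haCD with ⟨h₁, _⟩ | ⟨h₁, h₂⟩
      · exact h₁
      · exfalso
        have : a ∈ D \ C := Finset.mem_sdiff.mpr ⟨h₁, h₂⟩
        rw [hf] at this
        exact hfT' (Finset.mem_singleton.mp this ▸ ha)
    have hTC : T' = C := M.antichain T' (hSsub hT') C hC hsub
    have hgT : g ∈ C ∆ D := by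
      rw [hsup]; exact hsubsup (hTC ▸ hgC)
    rcases Finset.mem_symmDiff.mp hgT with ⟨_, h₂⟩ | ⟨_, h₂⟩
    · exact h₂ hgD
    · exact h₂ hgC
  have hsupT : S.sup id = T := by
    apply le_antisymm
    · apply Finset.sup_le
      intro T' hT'
      have : T' = T := by
        by_contra hne'
        exact Finset.disjoint_left.mp (hSdisj hT' hTS hne') (hall T' hT') hfT
      rw [this]; exact le_rfl
    · exact Finset.le_sup (f := id) hTS
  have hCDcirc : C ∆ D ∈ M.circuits := by
    rw [hsup, hsupT]; exact hSsub hTS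
  refine ⟨D, hD, C ∆ D, hCDcirc, ?_, ?_⟩
  · have : D ∩ (C ∆ D) = D \ C := by
      ext a
      simp only [Finset.mem_inter, Finset.mem_symmDiff, Finset.mem_sdiff]
      tauto
    rw [this, h1]
  · rw [symmDiff_comm C D, symmDiff_symmDiff_cancel_left]

lemma vmem_aux {n : ℕ} {C₁ C₂ : Finset (Fin n)} {e : Fin n} (h : C₁ ∩ C₂ = {e})
    {x : Fin n → EReal} {i₁ j₁ i₂ j₂ : Fin n}
    (hi₁ : i₁ ∈ C₁) (hj₁ : j₁ ∈ C₁) (hne₁ : i₁ ≠ j₁) (hx₁ : x i₁ = x j₁)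
    (hmax₁ : ∀ k ∈ C₁, x k ≤ x i₁)
    (hi₂ : i₂ ∈ C₂) (hj₂ : j₂ ∈ C₂) (hne₂ : i₂ ≠ j₂) (hx₂ : x i₂ = x j₂)
    (hmax₂ : ∀ k ∈ C₂, x k ≤ x i₂)
    (hm : x i₂ ≤ x i₁) : x ∈ V (C₁ ∆ C₂) := by
  have he12 : ∀ a, a ∈ C₁ → a ∈ C₂ → a = e := by
    intro a h1 h2
    have : a ∈ C₁ ∩ C₂ := Finset.mem_inter.mpr ⟨h1, h2⟩
    rw [h] at this
    exact Finset.mem_singleton.mp this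
  have heC₂ : e ∈ C₂ := by
    have : e ∈ C₁ ∩ C₂ := by rw [h]; exact Finset.mem_singleton_self e
    exact (Finset.mem_inter.mp this).2
  have hmaxC : ∀ k ∈ C₁ ∆ C₂, x k ≤ x i₁ := by
    intro k hk
    rcases Finset.mem_symmDiff.mp hk with ⟨h', _⟩ | ⟨h', _⟩
    · exact hmax₁ k h'
    · exact le_trans (hmax₂ k h') hm
  rcases eq_or_lt_of_le hm with heq | hlt
  · -- the two maxima agree
    set a₁ := if i₁ = e then j₁ else i₁ with ha₁def
    have ha₁C : a₁ ∈ C₁ := by rw [ha₁def]; split <;> assumption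
    have ha₁e : a₁ ≠ e := by
      rw [ha₁def]; split
      · rename_i hh; intro hj; exact hne₁ (by rw [hh, hj])
      · assumption
    have hxa₁ : x a₁ = x i₁ := by
      rw [ha₁def]; split
      · exact hx₁.symm
      · rfl
    set a₂ := if i₂ = e then j₂ else i₂ with ha₂def
    have ha₂C : a₂ ∈ C₂ := by rw [ha₂def]; split <;> assumption
    have ha₂e : a₂ ≠ e := by
      rw [ha₂def]; split
      · rename_i hh; intro hj; exact hne₂ (by rw [hh, hj])
      · assumption
    have hxa₂ : x a₂ = x i₂ := by
      rw [ha₂def]; split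
      · exact hx₂.symm
      · rfl
    have ha₁n2 : a₁ ∉ C₂ := fun hmem => ha₁e (he12 a₁ ha₁C hmem)
    have ha₂n1 : a₂ ∉ C₁ := fun hmem => ha₂e (he12 a₂ hmem ha₂C)
    refine ⟨a₁, Finset.mem_symmDiff.mpr (Or.inl ⟨ha₁C, ha₁n2⟩),
            a₂, Finset.mem_symmDiff.mpr (Or.inr ⟨ha₂C, ha₂n1⟩), ?_, ?_, ?_⟩
    · intro hh; exact ha₂n1 (hh ▸ ha₁C)
    · rw [hxa₁, hxa₂, heq]
    · intro k hk; rw [hxa₁]; exact hmaxC k hk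
  · -- strict: the two top witnesses of C₁ avoid e
    have hi₁e : i₁ ≠ e := by
      intro hh
      exact absurd (hh ▸ hmax₂ i₁ (hh ▸ heC₂)) (not_le.mpr hlt)
    have hj₁e : j₁ ≠ e := by
      intro hh
      have : x i₁ ≤ x i₂ := hx₁ ▸ hmax₂ j₁ (hh ▸ heC₂)
      exact absurd this (not_le.mpr hlt)
    have hi₁n2 : i₁ ∉ C₂ := fun hmem => hi₁e (he12 i₁ hi₁ hmem)
    have hj₁n2 : j₁ ∉ C₂ := fun hmem => hj₁e (he12 j₁ hj₁ hmem)
    exact ⟨i₁, Finset.mem_symmDiff.mpr (Or.inl ⟨hi₁, hi₁n2⟩),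
           j₁, Finset.mem_symmDiff.mpr (Or.inl ⟨hj₁, hj₁n2⟩), hne₁, hx₁, hmaxC⟩

lemma vmem_symmDiff {n : ℕ} {C₁ C₂ : Finset (Fin n)} {e : Fin n} (h : C₁ ∩ C₂ = {e})
    {x : Fin n → EReal} (h1 : x ∈ V C₁) (h2 : x ∈ V C₂) : x ∈ V (C₁ ∆ C₂) := by
  obtain ⟨i₁, hi₁, j₁, hj₁, hne₁, hx₁, hmax₁⟩ := h1
  obtain ⟨i₂, hi₂, j₂, hj₂, hne₂, hx₂, hmax₂⟩ := h2
  rcases le_total (x i₂) (x i₁) with hm | hm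
  · exact vmem_aux h hi₁ hj₁ hne₁ hx₁ hmax₁ hi₂ hj₂ hne₂ hx₂ hmax₂ hm
  · rw [symmDiff_comm]
    exact vmem_aux (by rw [Finset.inter_comm, h]) hi₂ hj₂ hne₂ hx₂ hmax₂ hi₁ hj₁ hne₁ hx₁ hmax₁ hm

theorem stmt8 {n : ℕ} (M : CircuitSet n) (hs : M.Simple) (hb : M.BinarySD)
    (C : Finset (Fin n)) (hC : C ∈ M.circuits) :
    C ∉ troBasisInter M ↔
      ∃ C₁ ∈ M.circuits, ∃ C₂ ∈ M.circuits, (C₁ ∩ C₂).card = 1 ∧ C₁ ∆ C₂ = C := by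
  have h01 : (0 : EReal) < 1 := by norm_num
  constructor
  · -- forward: if no decomposition exists, C lies in every tropical basis
    intro hn
    by_contra hdec
    push_neg at hdec
    apply hn
    rw [troBasisInter, Set.mem_sInter]
    intro B hB
    by_contra hCB
    obtain ⟨hBsub, hBeq⟩ := hB
    obtain ⟨e, he⟩ : C.Nonempty := Finset.card_pos.mp (by have := hs C hC; omega)
    set x : Fin n → EReal := fun i => if i ∈ C \ ({e} : Finset (Fin n)) then 0 else 1
      with hxdef
    have hx01 : ∀ i, x i = 0 ∨ x i = 1 := by
      intro i; rw [hxdef]; dsimp only; split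
      · exact Or.inl rfl
      · exact Or.inr rfl
    have hxle1 : ∀ i, x i ≤ 1 := by
      intro i; rcases hx01 i with h | h <;> rw [h]
      exact le_of_lt h01
    have hxe : x e = 1 := by
      rw [hxdef]; dsimp only
      rw [if_neg]; simp
    have hxTP : x ∈ TP n := by
      constructor
      · intro i
        rcases hx01 i with h | h <;> rw [h]
        · norm_num
        · rw [← EReal.coe_one]; exact EReal.coe_ne_top 1
      · exact ⟨e, by rw [hxe, ← EReal.coe_one]; exact EReal.coe_ne_bot 1⟩
    have hxB : x ∈ ⋂ D ∈ B, V D := by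
      simp only [Set.mem_iInter]
      intro D hD
      have hDc : D ∈ M.circuits := hBsub hD
      have hDne : D ≠ C := fun hh => hCB (hh ▸ hD)
      -- T : elements of D where x takes the value 1
      set T : Finset (Fin n) := D \ (C \ ({e} : Finset (Fin n))) with hTdef
      have hxT : ∀ i ∈ T, x i = 1 := by
        intro i hi
        rw [hxdef]; dsimp only
        rw [if_neg (Finset.mem_sdiff.mp hi).2]
      have hxT0 : ∀ i ∈ D, i ∉ T → x i = 0 := by
        intro i hiD hiT
        rw [hxdef]; dsimp only
        rw [if_pos]
        by_contra hh
        exact hiT (Finset.mem_sdiff.mpr ⟨hiD, hh⟩)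
      by_cases hT2 : 2 ≤ T.card
      · obtain ⟨i, hi, j, hj, hij⟩ := Finset.one_lt_card.mp hT2
        refine ⟨i, (Finset.mem_sdiff.mp hi).1, j, (Finset.mem_sdiff.mp hj).1, hij, ?_, ?_⟩
        · rw [hxT i hi, hxT j hj]
        · intro k _; rw [hxT i hi]; exact hxle1 k
      · by_cases hT0 : T.card = 0
        · -- x is identically 0 on D
          have hTempty : T = ∅ := Finset.card_eq_zero.mp hT0
          obtain ⟨i, hi, j, hj, hij⟩ := Finset.one_lt_card.mp
            (show 1 < D.card by have := hs D hDc; omega)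
          have hzi : x i = 0 := hxT0 i hi (by rw [hTempty]; exact Finset.notMem_empty i)
          refine ⟨i, hi, j, hj, hij, ?_, ?_⟩
          · rw [hzi, hxT0 j hj (by rw [hTempty]; exact Finset.notMem_empty j)]
          · intro k hk
            rw [hzi, hxT0 k hk (by rw [hTempty]; exact Finset.notMem_empty k)]
        · -- T is a singleton; then D \ C is a singleton, contradicting no-decomposition
          exfalso
          have hT1 : T.card = 1 := by omega
          obtain ⟨f, hf⟩ := Finset.card_eq_one.mp hT1
          have hDCsub : D \ C ⊆ T := by
            intro a ha
            have haD := (Finset.mem_sdiff.mp ha).1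
            have haC := (Finset.mem_sdiff.mp ha).2
            exact Finset.mem_sdiff.mpr ⟨haD, fun hh => haC (Finset.mem_sdiff.mp hh).1⟩
          have hDCne : (D \ C).Nonempty := by
            rw [Finset.sdiff_nonempty]
            intro hsub
            exact hDne (M.antichain D hDc C hC hsub)
          have hDC1 : (D \ C).card = 1 := by
            have hle : (D \ C).card ≤ 1 := by
              have := Finset.card_le_card hDCsub; omega
            have := Finset.card_pos.mpr hDCne
            omega
          obtain ⟨C₁, hC₁, C₂, hC₂, hcard, heq⟩ := key_decomp M hs hb hC hDc hDne hDC1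
          exact hdec C₁ hC₁ C₂ hC₂ hcard heq
    have hxall : x ∈ TP n ∩ ⋂ D ∈ M.circuits, V D := by
      rw [← hBeq]; exact ⟨hxTP, hxB⟩
    have hxC : x ∈ V C := by
      have := hxall.2
      simp only [Set.mem_iInter] at this
      exact this C hC
    obtain ⟨i, hi, j, hj, hij, hxixj, hmax⟩ := hxC
    have h1le : (1 : EReal) ≤ x i := by rw [← hxe]; exact hmax e he
    have hxi1 : x i = 1 := le_antisymm (hxle1 i) h1le
    have hie : i = e := by
      by_contra hh
      have : x i = 0 := by
        rw [hxdef]; dsimp only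
        rw [if_pos (Finset.mem_sdiff.mpr ⟨hi, fun hm => hh (Finset.mem_singleton.mp hm)⟩)]
      rw [this] at hxi1
      exact absurd hxi1 (by norm_num)
    have hje : j = e := by
      by_contra hh
      have : x j = 0 := by
        rw [hxdef]; dsimp only
        rw [if_pos (Finset.mem_sdiff.mpr ⟨hj, fun hm => hh (Finset.mem_singleton.mp hm)⟩)]
      rw [this, hxi1] at hxixj
      exact absurd hxixj (by norm_num)
    exact hij (hie.trans hje.symm)
  · -- backward: a decomposition makes M.circuits \ {C} a tropical basis
    rintro ⟨C₁, hC₁, C₂, hC₂, hcard, hsd⟩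
    obtain ⟨e, he⟩ := Finset.card_eq_one.mp hcard
    have hC₁ne : C₁ ≠ C := by
      intro hh
      subst hh
      have : C₂ = ∅ := by simpa using symmDiff_eq_left.mp hsd
      exact M.empty_not_mem (this ▸ hC₂)
    have hC₂ne : C₂ ≠ C := by
      intro hh
      subst hh
      have : C₁ = ∅ := by simpa using symmDiff_eq_right.mp hsd
      exact M.empty_not_mem (this ▸ hC₁)
    intro hmem
    rw [troBasisInter, Set.mem_sInter] at hmem
    have hbasis : IsTropicalBasis M (M.circuits \ {C}) := by
      constructor
      · exact Set.diff_subset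
      · apply Set.Subset.antisymm
        · rintro x ⟨hxTP, hxB⟩
          refine ⟨hxTP, ?_⟩
          simp only [Set.mem_iInter] at hxB ⊢
          intro D hD
          by_cases hDC : D = C
          · subst hDC
            have hx₁ : x ∈ V C₁ := hxB C₁ ⟨hC₁, hC₁ne⟩
            have hx₂ : x ∈ V C₂ := hxB C₂ ⟨hC₂, hC₂ne⟩
            have := vmem_symmDiff he hx₁ hx₂
            rwa [hsd] at this
          · exact hxB D ⟨hD, hDC⟩
        · rintro x ⟨hxTP, hxB⟩
          refine ⟨hxTP, ?_⟩
          simp only [Set.mem_iInter] at hxB ⊢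
          intro D hD
          exact hxB D hD.1
    have := hmem (M.circuits \ {C}) hbasis
    exact this.2 rfl
end

section
/- Let M be a simple matroid and let B be the set of all circuits of M that cannot be obtained as the symmetric difference C₁ △ C₂ of two circuits C₁, C₂ with |C₁ ∩ C₂| = 1. Then B is a tropical basis of M. -/
open scoped symmDiff

lemma aux_V {n : ℕ} {C₁ C₂ : Finset (Fin n)} {e : Fin n} (hI : C₁ ∩ C₂ = {e})
    {x : Fin n → EReal} {i j p q : Fin n}
    (hi : i ∈ C₁) (hj : j ∈ C₁) (hij : i ≠ j) (hxij : x i = x j)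
    (hm1 : ∀ k ∈ C₁, x k ≤ x i)
    (hp : p ∈ C₂) (hq : q ∈ C₂) (hpq : p ≠ q) (hxpq : x p = x q)
    (hm2 : ∀ k ∈ C₂, x k ≤ x p)
    (hle : x i ≤ x p) : x ∈ V (C₁ ∆ C₂) := by
  have hbound : ∀ k ∈ C₁ ∆ C₂, x k ≤ x p := by
    intro k hk
    rcases Finset.mem_symmDiff.1 hk with ⟨h1, _⟩ | ⟨h2, _⟩
    · exact (hm1 k h1).trans hle
    · exact hm2 k h2
  rcases eq_or_lt_of_le hle with heq | hlt
  · -- equality case: pick i' ∈ {i,j} \ {e}, p' ∈ {p,q} \ {e}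
    obtain ⟨i', hi'C, hi'ne, hxi'⟩ : ∃ i', i' ∈ C₁ ∧ i' ≠ e ∧ x i' = x i := by
      by_cases h : i = e
      · exact ⟨j, hj, fun hje => hij (h.trans hje.symm), hxij.symm⟩
      · exact ⟨i, hi, h, rfl⟩
    obtain ⟨p', hp'C, hp'ne, hxp'⟩ : ∃ p', p' ∈ C₂ ∧ p' ≠ e ∧ x p' = x p := by
      by_cases h : p = e
      · exact ⟨q, hq, fun hqe => hpq (h.trans hqe.symm), hxpq.symm⟩
      · exact ⟨p, hp, h, rfl⟩
    have hi'n2 : i' ∉ C₂ := fun h =>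
      hi'ne (Finset.mem_singleton.1 (hI ▸ Finset.mem_inter.2 ⟨hi'C, h⟩))
    have hp'n1 : p' ∉ C₁ := fun h =>
      hp'ne (Finset.mem_singleton.1 (hI ▸ Finset.mem_inter.2 ⟨h, hp'C⟩))
    refine ⟨i', Finset.mem_symmDiff.2 (Or.inl ⟨hi'C, hi'n2⟩),
      p', Finset.mem_symmDiff.2 (Or.inr ⟨hp'C, hp'n1⟩),
      fun h => hp'n1 (h ▸ hi'C), by rw [hxi', hxp', heq],
      fun k hk => by rw [hxi', heq]; exact hbound k hk⟩
  · -- strict case: p, q both outside C₁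
    have hpn1 : p ∉ C₁ := fun h => absurd (hm1 p h) (not_le.2 hlt)
    have hqn1 : q ∉ C₁ := fun h =>
      absurd ((hm1 q h).trans_lt (hxpq ▸ hlt)) (by simp [hxpq])
    exact ⟨p, Finset.mem_symmDiff.2 (Or.inr ⟨hp, hpn1⟩),
      q, Finset.mem_symmDiff.2 (Or.inr ⟨hq, hqn1⟩), hpq, hxpq, hbound⟩

lemma V_symmDiff {n : ℕ} {C₁ C₂ : Finset (Fin n)} (hc : (C₁ ∩ C₂).card = 1)
    {x : Fin n → EReal} (h1 : x ∈ V C₁) (h2 : x ∈ V C₂) : x ∈ V (C₁ ∆ C₂) := by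
  obtain ⟨e, hI⟩ := Finset.card_eq_one.1 hc
  obtain ⟨i, hi, j, hj, hij, hxij, hm1⟩ := h1
  obtain ⟨p, hp, q, hq, hpq, hxpq, hm2⟩ := h2
  rcases le_total (x i) (x p) with h | h
  · exact aux_V hI hi hj hij hxij hm1 hp hq hpq hxpq hm2 h
  · have : x ∈ V (C₂ ∆ C₁) :=
      aux_V (by rw [Finset.inter_comm]; exact hI) hp hq hpq hxpq hm2 hi hj hij hxij hm1 h
    rwa [symmDiff_comm] at this


lemma card_sd {n : ℕ} {C₁ C₂ : Finset (Fin n)} (hc : (C₁ ∩ C₂).card = 1)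
    (h1 : 3 ≤ C₁.card) (h2 : 3 ≤ C₂.card) :
    C₁.card < (C₁ ∆ C₂).card ∧ C₂.card < (C₁ ∆ C₂).card := by
  have e1 : (C₁ \ C₂).card + (C₁ ∩ C₂).card = C₁.card := Finset.card_sdiff_add_card_inter _ _
  have e2 : (C₂ \ C₁).card + (C₂ ∩ C₁).card = C₂.card := Finset.card_sdiff_add_card_inter _ _
  have e3 : (C₁ ∆ C₂).card = (C₁ \ C₂).card + (C₂ \ C₁).card := by
    rw [symmDiff_def]
    exact Finset.card_union_of_disjoint (disjoint_sdiff_sdiff)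
  rw [Finset.inter_comm] at e2
  omega

theorem stmt9 {n : ℕ} (M : CircuitSet n) (hs : M.Simple) :
    IsTropicalBasis M
      {C | C ∈ M.circuits ∧
        ¬ ∃ C₁ ∈ M.circuits, ∃ C₂ ∈ M.circuits, (C₁ ∩ C₂).card = 1 ∧ C₁ ∆ C₂ = C} := by
  constructor
  · intro C hC; exact hC.1
  · apply Set.Subset.antisymm
    · rintro x ⟨hTP, hx⟩
      refine ⟨hTP, Set.mem_iInter₂.2 fun C hC => ?_⟩
      have hxB : ∀ D ∈ {C | C ∈ M.circuits ∧
          ¬ ∃ C₁ ∈ M.circuits, ∃ C₂ ∈ M.circuits, (C₁ ∩ C₂).card = 1 ∧ C₁ ∆ C₂ = C},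
          x ∈ V D := fun D hD => Set.mem_iInter₂.1 hx D hD
      have main : ∀ m : ℕ, ∀ C ∈ M.circuits, C.card ≤ m → x ∈ V C := by
        intro m
        induction m with
        | zero => intro C hC hcard; have := hs C hC; omega
        | succ m ih =>
          intro C hC hcard
          by_cases hB : ∃ C₁ ∈ M.circuits, ∃ C₂ ∈ M.circuits, (C₁ ∩ C₂).card = 1 ∧ C₁ ∆ C₂ = C
          · obtain ⟨C₁, hC₁, C₂, hC₂, hcap, hsd⟩ := hB
            have hcards := card_sd hcap (hs C₁ hC₁) (hs C₂ hC₂)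
            rw [hsd] at hcards
            have h1 : x ∈ V C₁ := ih C₁ hC₁ (by omega)
            have h2 : x ∈ V C₂ := ih C₂ hC₂ (by omega)
            rw [← hsd]
            exact V_symmDiff hcap h1 h2
          · exact hxB C ⟨hC, hB⟩
      exact main C.card C hC le_rfl
    · rintro x ⟨hTP, hx⟩
      exact ⟨hTP, Set.mem_iInter₂.2 fun D hD => Set.mem_iInter₂.1 hx D hD.1⟩
end

section
/- Every simple binary matroid has a unique minimal tropical basis, namely the set of circuits that cannot be written as C₁ △ C₂ for circuits C₁, C₂ with |C₁ ∩ C₂| = 1. -/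
open scoped symmDiff

namespace StmtTen

variable {n : ℕ}

/-- Inner helper for Lemma 1: the case where the maximum on `C₁` is attained at the
common element `e`, with `a ∈ C₁`, `a ≠ e` a second maximizer. -/
lemma inner_aux {C₁ C₂ : Finset (Fin n)} {e a i₂ j₂ : Fin n} {x : Fin n → EReal}
    (h : C₁ ∩ C₂ = {e})
    (ha : a ∈ C₁) (hae : a ≠ e) (hxe : x e = x a)
    (hi₂ : i₂ ∈ C₂) (hj₂ : j₂ ∈ C₂) (hne₂ : i₂ ≠ j₂) (heq₂ : x i₂ = x j₂)
    (hmax₂ : ∀ k ∈ C₂, x k ≤ x i₂) (hle : x i₂ ≤ x a)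
    (hall : ∀ k ∈ C₁ ∆ C₂, x k ≤ x a) : x ∈ V (C₁ ∆ C₂) := by
  have heC₂ : e ∈ C₂ := by
    have : e ∈ C₁ ∩ C₂ := by rw [h]; exact Finset.mem_singleton_self e
    exact (Finset.mem_inter.mp this).2
  have hie : x i₂ = x a := le_antisymm hle (hxe ▸ hmax₂ e heC₂)
  -- choose t ∈ C₂ with t ≠ e and x t = x a
  obtain ⟨t, htC₂, hte, hxt⟩ : ∃ t ∈ C₂, t ≠ e ∧ x t = x a := by
    by_cases hi : i₂ = e
    · exact ⟨j₂, hj₂, fun hj => hne₂ (hi.trans hj.symm), heq₂ ▸ hie⟩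
    · exact ⟨i₂, hi₂, hi, hie⟩
  have haC₂ : a ∉ C₂ := fun hc =>
    hae (Finset.mem_singleton.mp (h ▸ Finset.mem_inter.mpr ⟨ha, hc⟩))
  have htC₁ : t ∉ C₁ := fun hc =>
    hte (Finset.mem_singleton.mp (h ▸ Finset.mem_inter.mpr ⟨hc, htC₂⟩))
  have haD : a ∈ C₁ ∆ C₂ := Finset.mem_symmDiff.mpr (Or.inl ⟨ha, haC₂⟩)
  have htD : t ∈ C₁ ∆ C₂ := Finset.mem_symmDiff.mpr (Or.inr ⟨htC₂, htC₁⟩)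
  exact ⟨a, haD, t, htD, fun hat => htC₁ (hat ▸ ha), hxt.symm, hall⟩

/-- One-sided version of Lemma 1 (the maximum over `C₁` dominates). -/
lemma one_sided {C₁ C₂ : Finset (Fin n)} {e i₁ j₁ i₂ j₂ : Fin n} {x : Fin n → EReal}
    (h : C₁ ∩ C₂ = {e})
    (hi₁ : i₁ ∈ C₁) (hj₁ : j₁ ∈ C₁) (hne₁ : i₁ ≠ j₁) (heq₁ : x i₁ = x j₁)
    (hmax₁ : ∀ k ∈ C₁, x k ≤ x i₁)
    (hi₂ : i₂ ∈ C₂) (hj₂ : j₂ ∈ C₂) (hne₂ : i₂ ≠ j₂) (heq₂ : x i₂ = x j₂)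
    (hmax₂ : ∀ k ∈ C₂, x k ≤ x i₂) (hle : x i₂ ≤ x i₁) : x ∈ V (C₁ ∆ C₂) := by
  have hall : ∀ k ∈ C₁ ∆ C₂, x k ≤ x i₁ := by
    intro k hk
    rcases Finset.mem_symmDiff.mp hk with ⟨hk₁, _⟩ | ⟨hk₂, _⟩
    · exact hmax₁ k hk₁
    · exact le_trans (hmax₂ k hk₂) hle
  by_cases hi : i₁ = e
  · have hj : j₁ ≠ e := fun hj => hne₁ (hi.trans hj.symm)
    exact inner_aux h hj₁ hj (hi ▸ heq₁) hi₂ hj₂ hne₂ heq₂ hmax₂ (heq₁ ▸ hle)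
      (fun k hk => heq₁ ▸ hall k hk)
  · by_cases hj : j₁ = e
    · exact inner_aux h hi₁ hi (hj ▸ heq₁.symm) hi₂ hj₂ hne₂ heq₂ hmax₂ hle hall
    · have hi₁C₂ : i₁ ∉ C₂ := fun hc =>
        hi (Finset.mem_singleton.mp (h ▸ Finset.mem_inter.mpr ⟨hi₁, hc⟩))
      have hj₁C₂ : j₁ ∉ C₂ := fun hc =>
        hj (Finset.mem_singleton.mp (h ▸ Finset.mem_inter.mpr ⟨hj₁, hc⟩))
      exact ⟨i₁, Finset.mem_symmDiff.mpr (Or.inl ⟨hi₁, hi₁C₂⟩),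
        j₁, Finset.mem_symmDiff.mpr (Or.inl ⟨hj₁, hj₁C₂⟩), hne₁, heq₁, hall⟩

/-- Lemma 1: if two circuits meet in a single element, a point in both tropical
hyperplanes lies in the hyperplane of their symmetric difference. -/
lemma V_symmDiff {C₁ C₂ : Finset (Fin n)} {x : Fin n → EReal}
    (h : (C₁ ∩ C₂).card = 1) (h₁ : x ∈ V C₁) (h₂ : x ∈ V C₂) : x ∈ V (C₁ ∆ C₂) := by
  obtain ⟨e, he⟩ := Finset.card_eq_one.mp h
  obtain ⟨i₁, hi₁, j₁, hj₁, hne₁, heq₁, hmax₁⟩ := h₁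
  obtain ⟨i₂, hi₂, j₂, hj₂, hne₂, heq₂, hmax₂⟩ := h₂
  rcases le_total (x i₂) (x i₁) with hle | hle
  · exact one_sided he hi₁ hj₁ hne₁ heq₁ hmax₁ hi₂ hj₂ hne₂ heq₂ hmax₂ hle
  · have he' : C₂ ∩ C₁ = {e} := by rw [Finset.inter_comm]; exact he
    have := one_sided he' hi₂ hj₂ hne₂ heq₂ hmax₂ hi₁ hj₁ hne₁ heq₁ hmax₁ hle
    rwa [symmDiff_comm] at this

/-- Lemma 2 (key fact): a "fundamental circuit" configuration forces the forbidden
decomposition of `C`. -/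
lemma keyA (M : CircuitSet n) (hs : M.Simple) (hb : M.BinarySD)
    {C Cf : Finset (Fin n)} {e f : Fin n}
    (hC : C ∈ M.circuits) (hCf : Cf ∈ M.circuits) (he : e ∈ C) (hfC : f ∉ C)
    (hfCf : f ∈ Cf) (hsub : Cf ⊆ (C \ {e}) ∪ {f}) :
    ∃ C₁ ∈ M.circuits, ∃ C₂ ∈ M.circuits, (C₁ ∩ C₂).card = 1 ∧ C₁ ∆ C₂ = C := by
  have hCfC : ∀ k ∈ Cf, k ≠ f → k ∈ C := by
    intro k hk hkf
    rcases Finset.mem_union.mp (hsub hk) with hk' | hk'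
    · exact (Finset.mem_sdiff.mp hk').1
    · exact absurd (Finset.mem_singleton.mp hk') hkf
  have hint : ∃ k, k ∈ C ∩ Cf := by
    obtain ⟨k, hk, hkf⟩ := Finset.exists_mem_ne
      (lt_of_lt_of_le (by norm_num) (hs Cf hCf)) f
    exact ⟨k, Finset.mem_inter.mpr ⟨hCfC k hk hkf, hk⟩⟩
  have heCf : e ∉ Cf := by
    intro hc
    rcases Finset.mem_union.mp (hsub hc) with hk' | hk'
    · exact (Finset.mem_sdiff.mp hk').2 (Finset.mem_singleton_self e)
    · exact hfC ((Finset.mem_singleton.mp hk') ▸ he)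
  have heD : e ∈ C ∆ Cf := Finset.mem_symmDiff.mpr (Or.inl ⟨he, heCf⟩)
  have hfD : f ∈ C ∆ Cf := Finset.mem_symmDiff.mpr (Or.inr ⟨hfCf, hfC⟩)
  obtain ⟨S, hSsub, hSdisj, hSsup⟩ := hb C hC Cf hCf
  have hfS : ∀ E ∈ S, f ∈ E := by
    intro E hE
    by_contra hfE
    have hEsub : E ⊆ C ∆ Cf := hSsup ▸ Finset.le_sup (f := id) hE
    have hEC : E ⊆ C := by
      intro k hk
      have hkf : k ≠ f := fun hkf => hfE (hkf ▸ hk)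
      rcases Finset.mem_symmDiff.mp (hEsub hk) with ⟨hk', _⟩ | ⟨hk', hk''⟩
      · exact hk'
      · exact absurd (hCfC k hk' hkf) hk''
    have hEeq : E = C := M.antichain E (hSsub hE) C hC hEC
    obtain ⟨k, hk⟩ := hint
    obtain ⟨hkC, hkCf⟩ := Finset.mem_inter.mp hk
    have : k ∈ C ∆ Cf := hEsub (hEeq ▸ hkC)
    rcases Finset.mem_symmDiff.mp this with ⟨_, h'⟩ | ⟨_, h'⟩
    · exact h' hkCf
    · exact h' hkC
  obtain ⟨E₀, hE₀S, _⟩ := Finset.mem_sup.mp (hSsup ▸ heD)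
  have hSeq : S = {E₀} := by
    apply Finset.eq_singleton_iff_unique_mem.mpr
    refine ⟨hE₀S, fun E hE => ?_⟩
    by_contra hne
    have hdisj : Disjoint E E₀ :=
      hSdisj (Finset.mem_coe.mpr hE) (Finset.mem_coe.mpr hE₀S) hne
    exact (Finset.disjoint_left.mp hdisj (hfS E hE)) (hfS E₀ hE₀S)
  have hDE₀ : C ∆ Cf = E₀ := by rw [hSsup, hSeq, Finset.sup_singleton]; rfl
  have hE₀circ : E₀ ∈ M.circuits := hSsub (by rw [hSeq]; exact Finset.mem_singleton_self E₀)
  refine ⟨Cf, hCf, E₀, hE₀circ, ?_, ?_⟩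
  · have : Cf ∩ E₀ = {f} := by
      rw [← hDE₀]
      ext k
      simp only [Finset.mem_inter, Finset.mem_singleton]
      constructor
      · rintro ⟨hkCf, hkD⟩
        rcases Finset.mem_symmDiff.mp hkD with ⟨_, h'⟩ | ⟨_, h'⟩
        · exact absurd hkCf h'
        · by_contra hkf
          exact h' (hCfC k hkCf hkf)
      · rintro rfl
        exact ⟨hfCf, hfD⟩
    rw [this, Finset.card_singleton]
  · rw [← hDE₀, symmDiff_comm C Cf, symmDiff_symmDiff_cancel_left Cf C]

/-- The candidate minimal tropical basis. -/
def Bset (M : CircuitSet n) : Set (Finset (Fin n)) :=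
  {C | C ∈ M.circuits ∧
    ¬ ∃ C₁ ∈ M.circuits, ∃ C₂ ∈ M.circuits, (C₁ ∩ C₂).card = 1 ∧ C₁ ∆ C₂ = C}

/-- Sufficiency: a point in all hyperplanes of `Bset` is in all circuit hyperplanes. -/
lemma mem_V_all (M : CircuitSet n) (hs : M.Simple) {x : Fin n → EReal}
    (hx : ∀ D ∈ Bset M, x ∈ V D) : ∀ C ∈ M.circuits, x ∈ V C := by
  have key : ∀ m : ℕ, ∀ C, C.card ≤ m → C ∈ M.circuits → x ∈ V C := by
    intro m
    induction m with
    | zero =>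
      intro C hc hC
      have : C = ∅ := Finset.card_eq_zero.mp (Nat.le_zero.mp hc)
      exact absurd (this ▸ hC) M.empty_not_mem
    | succ m ih =>
      intro C hc hC
      by_cases hB : C ∈ Bset M
      · exact hx C hB
      · have hdec : ∃ C₁ ∈ M.circuits, ∃ C₂ ∈ M.circuits,
            (C₁ ∩ C₂).card = 1 ∧ C₁ ∆ C₂ = C := by
          by_contra hcon
          exact hB ⟨hC, hcon⟩
        obtain ⟨C₁, hC₁, C₂, hC₂, hcard, heq⟩ := hdec
        have e1 : (C₁ \ C₂).card + (C₁ ∩ C₂).card = C₁.card :=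
          Finset.card_sdiff_add_card_inter C₁ C₂
        have e2 : (C₂ \ C₁).card + (C₂ ∩ C₁).card = C₂.card :=
          Finset.card_sdiff_add_card_inter C₂ C₁
        have e3 : (C₂ ∩ C₁).card = 1 := by rwa [Finset.inter_comm]
        have e4 : C.card = (C₁ \ C₂).card + (C₂ \ C₁).card := by
          rw [← heq]
          have : C₁ ∆ C₂ = (C₁ \ C₂) ∪ (C₂ \ C₁) := rfl
          rw [this, Finset.card_union_of_disjoint]
          exact disjoint_sdiff_sdiff
        have h3₁ : 3 ≤ C₁.card := hs C₁ hC₁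
        have h3₂ : 3 ≤ C₂.card := hs C₂ hC₂
        have hm₁ : C₁.card ≤ m := by omega
        have hm₂ : C₂.card ≤ m := by omega
        have v₁ := ih C₁ hm₁ hC₁
        have v₂ := ih C₂ hm₂ hC₂
        exact heq ▸ V_symmDiff hcard v₁ v₂
  exact fun C hC => key C.card C le_rfl hC

/-- `Bset` is a tropical basis. -/
lemma Bset_isBasis (M : CircuitSet n) (hs : M.Simple) : IsTropicalBasis M (Bset M) := by
  refine ⟨fun C hC => hC.1, ?_⟩
  apply Set.eq_of_subset_of_subset
  · rintro x ⟨hxTP, hxV⟩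
    refine ⟨hxTP, ?_⟩
    rw [Set.mem_iInter₂]
    intro D hD
    exact mem_V_all M hs (fun D' hD' => Set.mem_iInter₂.mp hxV D' hD') D hD
  · rintro x ⟨hxTP, hxV⟩
    refine ⟨hxTP, ?_⟩
    rw [Set.mem_iInter₂]
    intro D hD
    exact Set.mem_iInter₂.mp hxV D hD.1

/-- Necessity: each element of `Bset` admits a witness point. -/
lemma necessity (M : CircuitSet n) (hs : M.Simple) (hb : M.BinarySD)
    {C : Finset (Fin n)} (hCB : C ∈ Bset M) :
    ∃ x ∈ TP n, x ∉ V C ∧ ∀ D ∈ M.circuits, D ≠ C → x ∈ V D := by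
  obtain ⟨hC, hnd⟩ := hCB
  have hCne : C.Nonempty := by
    rcases Finset.eq_empty_or_nonempty C with h | h
    · exact absurd (h ▸ hC) M.empty_not_mem
    · exact h
  obtain ⟨e, he⟩ := hCne
  set x : Fin n → EReal := fun i => if i ∈ C ∧ i ≠ e then 0 else 1 with hxdef
  have hx1 : ∀ i, x i = 0 ∨ x i = 1 := by
    intro i; by_cases h : i ∈ C ∧ i ≠ e <;> simp [hxdef, h]
  have hxle : ∀ i, x i ≤ 1 := by
    intro i; rcases hx1 i with h | h <;> simp [h]
  have hxe : x e = 1 := by simp [hxdef]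
  have hxout : ∀ i, i ∉ C → x i = 1 := by
    intro i hi; simp [hxdef, hi]
  have hxin : ∀ i, i ∈ C → i ≠ e → x i = 0 := by
    intro i hi hie; simp [hxdef, hi, hie]
  have h0t : (0:EReal) ≠ ⊤ := by norm_num
  have h1t : (1:EReal) ≠ ⊤ := (EReal.coe_lt_top 1).ne
  have h1b : (1:EReal) ≠ ⊥ := (lt_trans EReal.bot_lt_zero (by norm_num)).ne'
  have h10 : (1:EReal) ≠ 0 := by norm_num
  have h10' : ¬ (1:EReal) ≤ 0 := by norm_num
  refine ⟨x, ⟨?_, ⟨e, ?_⟩⟩, ?_, ?_⟩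
  · intro i; rcases hx1 i with h | h <;> · rw [h]; assumption
  · rw [hxe]; exact h1b
  · rintro ⟨i, hi, j, hj, hij, heq, hmax⟩
    by_cases hie : i = e
    · have hje : j ≠ e := fun h => hij (hie.trans h.symm)
      rw [hie, hxe, hxin j hj hje] at heq
      exact h10 heq
    · have := hmax e he
      rw [hxe, hxin i hi hie] at this
      exact h10' this
  · intro D hD hDC
    have hDne : ¬ D ⊆ C := fun hsub => hDC (M.antichain D hD C hC hsub)
    obtain ⟨f, hfD, hfC⟩ := Finset.not_subset.mp hDne
    by_cases h2 : ∃ g ∈ D, g ∉ C ∧ g ≠ f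
    · -- two elements outside C
      obtain ⟨g, hgD, hgC, hgf⟩ := h2
      exact ⟨f, hfD, g, hgD, fun h => hgf h.symm, by rw [hxout f hfC, hxout g hgC],
        fun k hk => (hxout f hfC) ▸ hxle k⟩
    · push_neg at h2
      -- D \ C = {f}
      have hDC' : ∀ k ∈ D, k ≠ f → k ∈ C := by
        intro k hk hkf
        by_contra hkC
        exact hkf (h2 k hk hkC)
      by_cases heD : e ∈ D
      · have hef : e ≠ f := fun h => hfC (h ▸ he)
        exact ⟨e, heD, f, hfD, hef, by rw [hxe, hxout f hfC],
          fun k hk => hxe ▸ hxle k⟩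
      · -- bad case: use keyA to contradict hnd
        exfalso
        apply hnd
        refine keyA M hs hb hC hD he hfC hfD ?_
        intro k hk
        by_cases hkf : k = f
        · exact Finset.mem_union.mpr (Or.inr (Finset.mem_singleton.mpr hkf))
        · refine Finset.mem_union.mpr (Or.inl (Finset.mem_sdiff.mpr
            ⟨hDC' k hk hkf, ?_⟩))
          intro h'
          exact heD ((Finset.mem_singleton.mp h') ▸ hk)

/-- Every tropical basis contains `Bset`. -/
lemma Bset_subset_basis (M : CircuitSet n) (hs : M.Simple) (hb : M.BinarySD)
    {B' : Set (Finset (Fin n))} (hB' : IsTropicalBasis M B') : Bset M ⊆ B' := by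
  intro C hCB
  by_contra hCB'
  obtain ⟨x, hxTP, hxnV, hxV⟩ := necessity M hs hb hCB
  have hxin : x ∈ TP n ∩ ⋂ D ∈ B', V D := by
    refine ⟨hxTP, ?_⟩
    rw [Set.mem_iInter₂]
    intro D hD
    exact hxV D (hB'.1 hD) (fun h => hCB' (h ▸ hD))
  rw [hB'.2] at hxin
  exact hxnV (Set.mem_iInter₂.mp hxin.2 C hCB.1)

end StmtTen

theorem stmt10 {n : ℕ} (M : CircuitSet n) (hs : M.Simple) (hb : M.BinarySD) :
    letI B : Set (Finset (Fin n)) :=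
      {C | C ∈ M.circuits ∧
        ¬ ∃ C₁ ∈ M.circuits, ∃ C₂ ∈ M.circuits, (C₁ ∩ C₂).card = 1 ∧ C₁ ∆ C₂ = C}
    IsMinimalTropicalBasis M B ∧ ∀ B', IsMinimalTropicalBasis M B' → B' = B := by
  have hbasis := StmtTen.Bset_isBasis M hs
  constructor
  · refine ⟨hbasis, ?_⟩
    intro B' hB'sub hB'
    obtain ⟨C, hCB, hCB'⟩ := Set.exists_of_ssubset hB'sub
    obtain ⟨x, hxTP, hxnV, hxV⟩ := StmtTen.necessity M hs hb hCB
    have hxin : x ∈ TP n ∩ ⋂ D ∈ B', V D := by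
      refine ⟨hxTP, ?_⟩
      rw [Set.mem_iInter₂]
      intro D hD
      exact hxV D (hB'.1 hD) (fun h => hCB' (h ▸ hD))
    rw [hB'.2] at hxin
    exact hxnV (Set.mem_iInter₂.mp hxin.2 C hCB.1)
  · intro B' hB'
    have hsub : StmtTen.Bset M ⊆ B' := StmtTen.Bset_subset_basis M hs hb hB'.1
    rcases eq_or_lt_of_le hsub with h | h
    · exact h.symm
    · exact absurd hbasis (hB'.2 _ h)
end

section
/- Every simple regular matroid has a unique minimal tropical basis. -/
open scoped symmDiff

/-!
Call a circuit `C` chordless if no other circuit `D` has `|D \ C| ≤ 1`. For a chordless `C`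
and `f ∈ C`, the point that is `-∞` on `C \ {f}` and `0` elsewhere lies on `V D` for every
circuit `D ≠ C` (the maximum `0` is attained at two points of `D \ C`) but not on `V C`;
so every tropical basis contains all chordless circuits.

Conversely, let `M` be simple and binary. A chord `D` of `C`, with `D \ C = {g}`, produces a
circuit `A` with `A ∩ D = {g}` and `A ∆ D = C`. If `x` attains its maximum on `C` only once,
then `x ∉ V A` or `x ∉ V D`, and `A`, `D` are smaller than `C`. Descending to a chordless
circuit shows that the chordless circuits already form a tropical basis, hence the unique
minimal one. Regular matroids are binary because over `𝔽₂` the vectors of a circuit sum to zero.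
-/

section SymmDiff

variable {ι : Type*} [DecidableEq ι]

theorem sum_symmDiff_add_two_nsmul_sum_inter {A : Type*} [AddCommMonoid A]
    (s t : Finset ι) (f : ι → A) :
    ∑ i ∈ s ∆ t, f i + 2 • ∑ i ∈ s ∩ t, f i = ∑ i ∈ s, f i + ∑ i ∈ t, f i := by
  rw [symmDiff_eq_sup_sdiff_inf, Finset.sup_eq_union, Finset.inf_eq_inter, two_nsmul,
    ← add_assoc, Finset.sum_sdiff Finset.inter_subset_union]
  exact Finset.sum_union_inter

theorem sum_symmDiff_eq_add {A : Type*} [AddCommGroup A] [Module (ZMod 2) A]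
    (s t : Finset ι) (f : ι → A) :
    ∑ i ∈ s ∆ t, f i = ∑ i ∈ s, f i + ∑ i ∈ t, f i := by
  rw [← sum_symmDiff_add_two_nsmul_sum_inter, ZModModule.char_nsmul_eq_zero, add_zero]

theorem card_symmDiff_add_two_mul_card_inter (s t : Finset ι) :
    (s ∆ t).card + 2 * (s ∩ t).card = s.card + t.card := by
  simpa only [Finset.sum_const, smul_eq_mul, mul_one] using
    sum_symmDiff_add_two_nsmul_sum_inter s t fun _ => (1 : ℕ)

end SymmDiff

theorem not_linearIndepOn_of_sum_eq_zero {ι R W : Type*} [Ring R] [Nontrivial R]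
    [AddCommGroup W] [Module R W] {v : ι → W} {Z : Finset ι} (hZ : Z.Nonempty)
    (hsum : ∑ i ∈ Z, v i = 0) : ¬ LinearIndepOn R v ↑Z :=
  not_linearIndepOn_finset_iff.2 ⟨fun _ => 1, by simpa using hsum, hZ.choose, hZ.choose_spec,
    one_ne_zero⟩

section Tropical

variable {n : ℕ}

theorem notMem_V_iff {C : Finset (Fin n)} (hC : C.Nonempty) (x : Fin n → EReal) :
    x ∉ V C ↔ ∃ f ∈ C, ∀ k ∈ C, k ≠ f → x k < x f := by
  constructor
  · intro hx
    obtain ⟨f, hf, hmax⟩ := C.exists_max_image x hC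
    refine ⟨f, hf, fun k hk hkf => (hmax k hk).lt_of_ne fun h => hx ?_⟩
    exact ⟨k, hk, f, hf, hkf, h, fun j hj => h ▸ hmax j hj⟩
  · rintro ⟨f, hf, hlt⟩ ⟨i, hi, j, hj, hij, hxij, hmax⟩
    have hif : i = f := by_contra fun h => (hmax f hf).not_gt (hlt i hi h)
    subst hif
    exact (hlt j hj hij.symm).ne hxij.symm

theorem notMem_V_inter_V_of_forall_lt {P Q : Finset (Fin n)} {f g : Fin n} (hPQ : P ∩ Q = {g})
    (hfP : f ∈ P) (hfQ : f ∉ Q) {x : Fin n → EReal} (hmax : ∀ k ∈ P ∆ Q, k ≠ f → x k < x f) :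
    x ∉ V P ∩ V Q := by
  have hgP : g ∈ P := Finset.mem_of_mem_inter_left (hPQ ▸ Finset.mem_singleton_self g)
  have hgQ : g ∈ Q := Finset.mem_of_mem_inter_right (hPQ ▸ Finset.mem_singleton_self g)
  have hnotin : ∀ {S T : Finset (Fin n)}, S ∩ T = {g} → ∀ k ∈ S, k ≠ g → k ∉ T :=
    fun hST k hkS hkg hkT => hkg (Finset.mem_singleton.1 (hST ▸ Finset.mem_inter.2 ⟨hkS, hkT⟩))
  rintro ⟨hxP, hxQ⟩
  -- if `x g < x f` the maximum on `P` is attained only at `f`, otherwise that on `Q` only at `g`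
  rcases lt_or_ge (x g) (x f) with hgf | hfg
  · refine (notMem_V_iff ⟨f, hfP⟩ x).2 ⟨f, hfP, fun k hk hkf => ?_⟩ hxP
    rcases eq_or_ne k g with rfl | hkg
    · exact hgf
    · exact hmax k (Finset.mem_symmDiff.2 (Or.inl ⟨hk, hnotin hPQ k hk hkg⟩)) hkf
  · refine (notMem_V_iff ⟨g, hgQ⟩ x).2 ⟨g, hgQ, fun k hk hkg => ?_⟩ hxQ
    have hkP := hnotin (Finset.inter_comm P Q ▸ hPQ) k hk hkg
    exact (hmax k (Finset.mem_symmDiff.2 (Or.inr ⟨hk, hkP⟩))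
      (ne_of_mem_of_not_mem hk hfQ)).trans_le hfg

theorem V_inter_V_subset_V_symmDiff {P Q : Finset (Fin n)} {g : Fin n} (hPQ : P ∩ Q = {g})
    (hne : (P ∆ Q).Nonempty) : V P ∩ V Q ⊆ V (P ∆ Q) := by
  intro x hx
  by_contra hxPQ
  obtain ⟨f, hf, hmax⟩ := (notMem_V_iff hne x).1 hxPQ
  rcases Finset.mem_symmDiff.1 hf with ⟨hfP, hfQ⟩ | ⟨hfQ, hfP⟩
  · exact notMem_V_inter_V_of_forall_lt hPQ hfP hfQ hmax hx
  · rw [symmDiff_comm] at hmax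
    exact notMem_V_inter_V_of_forall_lt (Finset.inter_comm P Q ▸ hPQ) hfQ hfP hmax hx.symm

end Tropical

namespace CircuitSet

variable {n : ℕ} (M : CircuitSet n)

theorem nonempty_of_mem_circuits {C : Finset (Fin n)} (hC : C ∈ M.circuits) : C.Nonempty :=
  Finset.nonempty_iff_ne_empty.2 fun h => M.empty_not_mem (h ▸ hC)

def IsRepresentedBy {W : Type*} [AddCommGroup W] (K : Type*) [Field K] [Module K W]
    (v : Fin n → W) : Prop :=
  ∀ C : Finset (Fin n), C ∈ M.circuits ↔
    ¬ LinearIndepOn K v ↑C ∧ ∀ D : Finset (Fin n), D ⊂ C → LinearIndepOn K v ↑D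

def IsDisjointUnionOfCircuits (Z : Finset (Fin n)) : Prop :=
  ∃ S : Finset (Finset (Fin n)), ↑S ⊆ M.circuits ∧
    (S : Set (Finset (Fin n))).PairwiseDisjoint id ∧ Z = S.sup id

section Representation

variable {M} {W : Type*} [AddCommGroup W]

theorem exists_mem_circuits_subset {K : Type*} [Field K] [Module K W] {v : Fin n → W}
    (hv : M.IsRepresentedBy K v) {Z : Finset (Fin n)} (hZ : ¬ LinearIndepOn K v ↑Z) :
    ∃ C ∈ M.circuits, C ⊆ Z := by
  obtain ⟨C, hCZ, hC⟩ :=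
    exists_minimal_le_of_wellFoundedLT (fun C : Finset (Fin n) => ¬ LinearIndepOn K v ↑C) Z hZ
  exact ⟨C, (hv C).2 ⟨hC.prop, fun D hDC => not_not.1 (hC.not_prop_of_lt hDC)⟩, hCZ⟩

variable [Module (ZMod 2) W] {v : Fin n → W}

theorem sum_eq_zero_of_mem_circuits (hv : M.IsRepresentedBy (ZMod 2) v) {C : Finset (Fin n)}
    (hC : C ∈ M.circuits) : ∑ i ∈ C, v i = 0 := by
  classical
  obtain ⟨hdep, hmin⟩ := (hv C).1 hC
  obtain ⟨f, hf, i, hiC, hfi⟩ := not_linearIndepOn_finset_iff.1 hdep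
  set S := C.filter (fun i => f i ≠ 0)
  -- over `𝔽₂` the nonzero coefficients are all `1`, so the support `S` sums to zero
  have hS : ∑ i ∈ S, v i = 0 := by
    rw [← hf, ← Finset.sum_filter_of_ne fun j _ h => left_ne_zero_of_smul h]
    refine Finset.sum_congr rfl fun j hj => ?_
    rw [(by decide : ∀ a : ZMod 2, a ≠ 0 → a = 1) _ (Finset.mem_filter.1 hj).2, one_smul]
  have hSC : S = C := by
    by_contra hne
    exact not_linearIndepOn_of_sum_eq_zero ⟨i, Finset.mem_filter.2 ⟨hiC, hfi⟩⟩ hS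
      (hmin S ((Finset.filter_subset _ _).ssubset_of_ne hne))
  rwa [hSC] at hS

theorem isDisjointUnionOfCircuits_of_sum_eq_zero (hv : M.IsRepresentedBy (ZMod 2) v)
    (Z : Finset (Fin n)) (hZ : ∑ i ∈ Z, v i = 0) : M.IsDisjointUnionOfCircuits Z := by
  classical
  induction Z using Finset.strongInduction with
  | H Z ih => ?_
  rcases Z.eq_empty_or_nonempty with rfl | hZne
  · exact ⟨∅, by simp, by simp, rfl⟩
  obtain ⟨C, hC, hCZ⟩ := exists_mem_circuits_subset hv (not_linearIndepOn_of_sum_eq_zero hZne hZ)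
  have hrest : ∑ i ∈ Z \ C, v i = 0 := by
    rw [Finset.sum_sdiff_eq_sub hCZ, hZ, sum_eq_zero_of_mem_circuits hv hC, sub_zero]
  obtain ⟨S, hS, hSdisj, hSZ⟩ :=
    ih (Z \ C) (Finset.sdiff_ssubset hCZ (M.nonempty_of_mem_circuits hC)) hrest
  refine ⟨insert C S, ?_, ?_, ?_⟩
  · rw [Finset.coe_insert, Set.insert_subset_iff]
    exact ⟨hC, hS⟩
  · rw [Finset.coe_insert]
    exact hSdisj.insert fun D hD _ =>
      Finset.disjoint_of_subset_right (hSZ ▸ Finset.le_sup (f := id) hD) Finset.disjoint_sdiff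
  · rw [Finset.sup_insert, ← hSZ, id, Finset.sup_eq_union, Finset.union_sdiff_of_subset hCZ]

end Representation

variable {M}

theorem binarySD_of_represents (h : Represents (ZMod 2) M) : M.BinarySD := by
  obtain ⟨m, v, hv⟩ := h
  intro C₁ h₁ C₂ h₂
  refine isDisjointUnionOfCircuits_of_sum_eq_zero hv _ ?_
  rw [sum_symmDiff_eq_add, sum_eq_zero_of_mem_circuits hv h₁,
    sum_eq_zero_of_mem_circuits hv h₂, add_zero]

-- In a graphic matroid these are the chordless cycles.
def chordlessCircuits (M : CircuitSet n) : Set (Finset (Fin n)) :=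
  {C | C ∈ M.circuits ∧ ∀ D ∈ M.circuits, D ≠ C → 2 ≤ (D \ C).card}

theorem exists_mem_TP_notMem_V_of_mem_chordlessCircuits {C : Finset (Fin n)}
    (hC : C ∈ M.chordlessCircuits) :
    ∃ y ∈ TP n, y ∉ V C ∧ ∀ D ∈ M.circuits, D ≠ C → y ∈ V D := by
  classical
  obtain ⟨f, hf⟩ := M.nonempty_of_mem_circuits hC.1
  set y : Fin n → EReal := fun i => if i ∈ C.erase f then ⊥ else 0 with hy
  have hy_le : ∀ k, y k ≤ 0 := fun k => by simp only [hy]; split <;> simp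
  refine ⟨y, ⟨fun i => (hy_le i).trans_lt EReal.zero_lt_top |>.ne, f, by simp [hy]⟩, ?_, ?_⟩
  · refine (notMem_V_iff ⟨f, hf⟩ y).2 ⟨f, hf, fun k hk hkf => ?_⟩
    simp [hy, hk, hkf]
  · intro D hD hDC
    obtain ⟨i, hi, j, hj, hij⟩ := Finset.one_lt_card.1 (hC.2 D hD hDC)
    have hy0 : ∀ k ∈ D \ C, y k = 0 := fun k hk => by simp [hy, (Finset.mem_sdiff.1 hk).2]
    exact ⟨i, (Finset.mem_sdiff.1 hi).1, j, (Finset.mem_sdiff.1 hj).1, hij,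
      by rw [hy0 i hi, hy0 j hj], fun k _ => hy0 i hi ▸ hy_le k⟩

theorem chordlessCircuits_subset {B : Set (Finset (Fin n))} (hB : IsTropicalBasis M B) :
    M.chordlessCircuits ⊆ B := by
  intro C hC
  by_contra hCB
  obtain ⟨y, hyTP, hyC, hyV⟩ := exists_mem_TP_notMem_V_of_mem_chordlessCircuits hC
  have hyB : y ∈ TP n ∩ ⋂ D ∈ B, V D :=
    ⟨hyTP, Set.mem_iInter₂.2 fun D hD => hyV D (hB.1 hD) (ne_of_mem_of_not_mem hD hCB)⟩
  rw [hB.2] at hyB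
  exact hyC (Set.mem_iInter₂.1 hyB.2 C hC.1)

theorem symmDiff_eq_of_symmDiff_subset (hb : M.BinarySD) {A D C : Finset (Fin n)}
    (hA : A ∈ M.circuits) (hD : D ∈ M.circuits) (hAD : A ≠ D) (hC : C ∈ M.circuits)
    (hsub : A ∆ D ⊆ C) : A ∆ D = C := by
  obtain ⟨S, hS, -, hSAD⟩ := hb A hA D hD
  obtain ⟨X, hX⟩ : S.Nonempty := by
    rw [Finset.nonempty_iff_ne_empty]
    rintro rfl
    exact hAD (symmDiff_eq_bot.1 hSAD)
  have hXAD : X ⊆ A ∆ D := hSAD ▸ Finset.le_sup (f := id) hX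
  have hXC : X = C := M.antichain X (hS hX) C hC (hXAD.trans hsub)
  exact hsub.antisymm (hXC ▸ hXAD)

theorem exists_mem_circuits_symmDiff_eq_inter_eq (hb : M.BinarySD) (hs : M.Simple)
    {C D : Finset (Fin n)} (hC : C ∈ M.circuits) (hD : D ∈ M.circuits) {g : Fin n}
    (hDC : D \ C = {g}) : ∃ A ∈ M.circuits, A ∆ D = C ∧ A ∩ D = {g} := by
  have hgDC : g ∈ D ∧ g ∉ C := Finset.mem_sdiff.1 (hDC ▸ Finset.mem_singleton_self g)
  obtain ⟨S, hS, -, hSCD⟩ := hb C hC D hD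
  obtain ⟨A, hAS, hgA⟩ := Finset.mem_sup.1 (hSCD ▸ Finset.mem_symmDiff.2 (Or.inr hgDC))
  have hACD : A ⊆ C ∆ D := hSCD ▸ Finset.le_sup (f := id) hAS
  have hA_of_notMem : ∀ a ∈ A, a ∉ C → a = g := fun a ha haC => by
    rcases Finset.mem_symmDiff.1 (hACD ha) with ⟨haC', -⟩ | haDC
    · exact absurd haC' haC
    · exact Finset.mem_singleton.1 (hDC ▸ Finset.mem_sdiff.2 haDC)
  have hA_of_mem : ∀ a ∈ A, a ∈ D → a = g := fun a ha haD => by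
    rcases Finset.mem_symmDiff.1 (hACD ha) with ⟨-, haD'⟩ | haDC
    · exact absurd haD haD'
    · exact Finset.mem_singleton.1 (hDC ▸ Finset.mem_sdiff.2 haDC)
  have hAD : A ≠ D := by
    rintro rfl
    have hAg : A ⊆ {g} := fun a ha => Finset.mem_singleton.2 (hA_of_mem a ha ha)
    have := (hs A (hS hAS)).trans (Finset.card_le_card hAg)
    simp at this
  have hADC : A ∆ D ⊆ C := by
    intro a ha
    by_contra haC
    rcases Finset.mem_symmDiff.1 ha with ⟨haA, haD⟩ | ⟨haD, haA⟩
    · exact haD (hA_of_notMem a haA haC ▸ hgDC.1)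
    · exact haA (Finset.mem_singleton.1 (hDC ▸ Finset.mem_sdiff.2 ⟨haD, haC⟩) ▸ hgA)
  refine ⟨A, hS hAS, symmDiff_eq_of_symmDiff_subset hb (hS hAS) hD hAD hC hADC, ?_⟩
  ext a
  refine ⟨fun ha => Finset.mem_singleton.2 (hA_of_mem a (Finset.mem_inter.1 ha).1
    (Finset.mem_inter.1 ha).2), fun ha => ?_⟩
  rw [Finset.mem_singleton.1 ha]
  exact Finset.mem_inter.2 ⟨hgA, hgDC.1⟩

theorem exists_mem_circuits_notMem_V_card_lt (hb : M.BinarySD) (hs : M.Simple)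
    {C : Finset (Fin n)} (hC : C ∈ M.circuits) (hCch : C ∉ M.chordlessCircuits)
    {x : Fin n → EReal} (hx : x ∉ V C) : ∃ C' ∈ M.circuits, x ∉ V C' ∧ C'.card < C.card := by
  obtain ⟨D, hD, hDC, hcard⟩ : ∃ D ∈ M.circuits, D ≠ C ∧ (D \ C).card < 2 := by
    simpa [chordlessCircuits, hC] using hCch
  have hDC_ne : (D \ C).Nonempty :=
    Finset.sdiff_nonempty.2 fun hDsub => hDC (M.antichain D hD C hC hDsub)
  obtain ⟨g, hg⟩ := Finset.card_eq_one.1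
    (show (D \ C).card = 1 by have := hDC_ne.card_pos; omega)
  obtain ⟨A, hA, hADC, hADg⟩ := exists_mem_circuits_symmDiff_eq_inter_eq hb hs hC hD hg
  have hcardC : C.card + 2 = A.card + D.card := by
    rw [← hADC, ← card_symmDiff_add_two_mul_card_inter, hADg, Finset.card_singleton]
  have hxAD : x ∉ V A ∩ V D := fun hxAD =>
    hx (hADC ▸ V_inter_V_subset_V_symmDiff hADg (hADC ▸ M.nonempty_of_mem_circuits hC) hxAD)
  have hA3 := hs A hA
  have hD3 := hs D hD
  by_cases hxA : x ∈ V A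
  · exact ⟨D, hD, fun hxD => hxAD ⟨hxA, hxD⟩, by omega⟩
  · exact ⟨A, hA, hxA, by omega⟩

theorem exists_mem_chordlessCircuits_notMem_V (hb : M.BinarySD) (hs : M.Simple)
    {C : Finset (Fin n)} (hC : C ∈ M.circuits) {x : Fin n → EReal} (hx : x ∉ V C) :
    ∃ C' ∈ M.chordlessCircuits, x ∉ V C' := by
  obtain ⟨C', ⟨hC', hxC'⟩, hmin⟩ := Set.exists_min_image {C | C ∈ M.circuits ∧ x ∉ V C}
    Finset.card (Set.toFinite _) ⟨C, hC, hx⟩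
  refine ⟨C', by_contra fun hch => ?_, hxC'⟩
  obtain ⟨C'', hC'', hxC'', hlt⟩ := exists_mem_circuits_notMem_V_card_lt hb hs hC' hch hxC'
  exact (hmin C'' ⟨hC'', hxC''⟩).not_gt hlt

theorem isTropicalBasis_chordlessCircuits (hb : M.BinarySD) (hs : M.Simple) :
    IsTropicalBasis M M.chordlessCircuits := by
  refine ⟨fun C hC => hC.1, Set.Subset.antisymm ?_ ?_⟩
  · rintro x ⟨hxTP, hxV⟩
    refine ⟨hxTP, Set.mem_iInter₂.2 fun C hC => by_contra fun hxC => ?_⟩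
    obtain ⟨C', hC', hxC'⟩ := exists_mem_chordlessCircuits_notMem_V hb hs hC hxC
    exact hxC' (Set.mem_iInter₂.1 hxV C' hC')
  · exact Set.inter_subset_inter_right _ (Set.biInter_mono (fun C hC => hC.1) fun _ _ => le_rfl)

end CircuitSet

theorem hasUniqueMinimalTropicalBasis_of_forall_subset {n : ℕ} {M : CircuitSet n}
    {B₀ : Set (Finset (Fin n))} (h₀ : IsTropicalBasis M B₀)
    (hsub : ∀ B, IsTropicalBasis M B → B₀ ⊆ B) : HasUniqueMinimalTropicalBasis M :=
  ⟨B₀, ⟨h₀, fun _ hB hB' => hB.not_subset (hsub _ hB')⟩,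
    fun _ hB => ((hsub _ hB.1).eq_or_ssubset.resolve_right fun h => hB.2 _ h h₀).symm⟩

theorem stmt11 {n : ℕ} (M : CircuitSet n) (hs : M.Simple)
    (hreg : ∀ (K : Type) [Field K], Represents K M) :
    HasUniqueMinimalTropicalBasis M := by
  have hb : M.BinarySD := M.binarySD_of_represents (hreg (ZMod 2))
  exact hasUniqueMinimalTropicalBasis_of_forall_subset
    (M.isTropicalBasis_chordlessCircuits hb hs) fun _ => M.chordlessCircuits_subset
end

section
/- Let M = ([n], C) be a simple matroid and let D be a circuit such that every other circuit C' ∈ C \ {D} satisfies |C' \ D| ≥ 2. Define x ∈ TP^{n-1} by assigning weight 0 to all but one chosen element of D, and weight 1 to the remaining element of D and to all elements of [n] \ D. Then x ∉ V(D) but x ∈ V(C') for every circuit C' ≠ D; consequently D lies in every tropical basis of M. -/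
open scoped symmDiff

theorem stmt14 {n : ℕ} (M : CircuitSet n) (hs : M.Simple)
    (D : Finset (Fin n)) (hD : D ∈ M.circuits)
    (h2 : ∀ C' ∈ M.circuits, C' ≠ D → 2 ≤ (C' \ D).card)
    (e : Fin n) (he : e ∈ D) :
    letI x : Fin n → EReal := fun i => if i ∈ D ∧ i ≠ e then 0 else 1
    x ∈ TP n ∧ x ∉ V D ∧ (∀ C' ∈ M.circuits, C' ≠ D → x ∈ V C') ∧
      ∀ B, IsTropicalBasis M B → D ∈ B := by
  set x : Fin n → EReal := fun i => if i ∈ D ∧ i ≠ e then 0 else 1 with hxdef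
  have hx01 : ∀ i, x i = 0 ∨ x i = 1 := by
    intro i; by_cases h : i ∈ D ∧ i ≠ e
    · left; simp [x, h]
    · right; simp [x, h]
  have hle1 : ∀ i, x i ≤ 1 := by
    intro i; rcases hx01 i with h | h
    · rw [h]; norm_num
    · rw [h]
  have hxe : x e = 1 := by simp [x]
  have hxne : ∀ i ∈ D, i ≠ e → x i = 0 := fun i hi hne => by simp [x, hi, hne]
  have hTP : x ∈ TP n := by
    constructor
    · intro i; rcases hx01 i with h | h <;> rw [h]
      · exact EReal.zero_ne_top
      · rw [← EReal.coe_one]; exact EReal.coe_ne_top 1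
    · refine ⟨e, ?_⟩
      rw [hxe, ← EReal.coe_one]; exact EReal.coe_ne_bot 1
  have hnotV : x ∉ V D := by
    rintro ⟨i, hi, j, hj, hij, hxixj, hmax⟩
    have h1i : (1 : EReal) ≤ x i := hxe ▸ hmax e he
    have h1j : (1 : EReal) ≤ x j := hxixj ▸ h1i
    have hie : i = e := by
      by_contra h
      have := hxne i hi h
      rw [this] at h1i
      exact absurd h1i (by simpa using EReal.zero_lt_one.not_le)
    have hje : j = e := by
      by_contra h
      have := hxne j hj h
      rw [this] at h1j
      exact absurd h1j (by simpa using EReal.zero_lt_one.not_le)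
    exact hij (hie.trans hje.symm)
  have hV : ∀ C' ∈ M.circuits, C' ≠ D → x ∈ V C' := by
    intro C' hC' hne
    have hcard := h2 C' hC' hne
    obtain ⟨i, hi, j, hj, hij⟩ := Finset.one_lt_card.mp (lt_of_lt_of_le one_lt_two hcard)
    rw [Finset.mem_sdiff] at hi hj
    have hxi : x i = 1 := by
      simp [x]; intro h; exact absurd h hi.2
    have hxj : x j = 1 := by
      simp [x]; intro h; exact absurd h hj.2
    exact ⟨i, hi.1, j, hj.1, hij, by rw [hxi, hxj], fun k _ => hxi ▸ hle1 k⟩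
  refine ⟨hTP, hnotV, hV, ?_⟩
  intro B hB
  by_contra hDB
  have hxB : x ∈ TP n ∩ ⋂ C ∈ B, V C := by
    refine ⟨hTP, ?_⟩
    simp only [Set.mem_iInter]
    intro C hC
    exact hV C (hB.1 hC) (fun h => hDB (h ▸ hC))
  rw [hB.2] at hxB
  have := hxB.2
  simp only [Set.mem_iInter] at this
  exact hnotV (this D hD)
end

section
/- Any tropical basis of a matroid M contains every circuit D for which there exists x ∈ TP^{n-1} with x ∉ V(D) and x ∈ V(D') for all circuits D' ≠ D; in particular, if B₁ and B₂ are two distinct minimal tropical bases of M, then the intersection of all tropical bases is not a tropical basis. -/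
open scoped symmDiff

theorem stmt18 {n : ℕ} (M : CircuitSet n) :
    (∀ B, IsTropicalBasis M B → ∀ D ∈ M.circuits,
        (∃ x ∈ TP n, x ∉ V D ∧ ∀ D' ∈ M.circuits, D' ≠ D → x ∈ V D') → D ∈ B) ∧
    (∀ B₁ B₂, IsMinimalTropicalBasis M B₁ → IsMinimalTropicalBasis M B₂ → B₁ ≠ B₂ →
      ¬ IsTropicalBasis M (troBasisInter M)) := by
  constructor
  · rintro B hB D hD ⟨x, hxTP, hxnV, hx'⟩
    by_contra hDB
    have hmem : x ∈ TP n ∩ ⋂ D' ∈ B, V D' := by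
      refine ⟨hxTP, ?_⟩
      simp only [Set.mem_iInter]
      intro D' hD'B
      exact hx' D' (hB.1 hD'B) (fun h => hDB (h ▸ hD'B))
    rw [hB.2] at hmem
    exact hxnV (by
      have := hmem.2
      simp only [Set.mem_iInter] at this
      exact this D hD)
  · intro B₁ B₂ h₁ h₂ hne hInt
    have s1 : troBasisInter M ⊆ B₁ := Set.sInter_subset_of_mem h₁.1
    have s2 : troBasisInter M ⊆ B₂ := Set.sInter_subset_of_mem h₂.1
    have e1 : troBasisInter M = B₁ := by
      by_contra h
      exact h₁.2 _ (lt_of_le_of_ne s1 h) hInt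
    have e2 : troBasisInter M = B₂ := by
      by_contra h
      exact h₂.2 _ (lt_of_le_of_ne s2 h) hInt
    exact hne (e1 ▸ e2)
end
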